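/- arXiv:2501.12108 — 6 statements merged into one kernel-verified Lean document; each statement's English description precedes it below -/
import Mathlib

section
/- For every d ≥ 1, b(C(d+2,2) - d - 1, d, d) - b(C(d+2,2) - d, d, d) = b(C(d+2,2) - d - 1, d, d+1) - b(C(d+2,2) - d - 2, d, d+1). -/
/-- `compB m K l` = number of `l`-tuples `(b_1, …, b_l)` of integers with
`0 ≤ b_i ≤ K` and `b_1 + ⋯ + b_l = m`. -/
def compB (m K l : ℕ) : ℕ :=
  ((Finset.univ : Finset (Fin l → Fin (K + 1))).filter (fun f => ∑ i, (f i : ℕ) = m)).card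

lemma compB_symm (m K l : ℕ) (h : m ≤ K * l) :
    compB m K l = compB (K * l - m) K l := by
  classical
  have key : ∀ f : Fin l → Fin (K + 1),
      (∑ i, ((f i).rev : ℕ)) + ∑ i, (f i : ℕ) = K * l := by
    intro f
    rw [← Finset.sum_add_distrib]
    have h1 : ∀ i : Fin l, ((f i).rev : ℕ) + (f i : ℕ) = K := by
      intro i
      have h2 : (f i : ℕ) ≤ K := Nat.lt_succ_iff.mp (f i).isLt
      rw [Fin.val_rev]
      omega
    simp only [h1]
    simp [Finset.sum_const, mul_comm]
  unfold compB
  refine Finset.card_bij' (fun f _ => fun i => (f i).rev) (fun f _ => fun i => (f i).rev)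
    ?_ ?_ ?_ ?_
  · intro f hf
    simp only [Finset.mem_filter, Finset.mem_univ, true_and] at hf ⊢
    have := key f; omega
  · intro f hf
    simp only [Finset.mem_filter, Finset.mem_univ, true_and] at hf ⊢
    have := key f; omega
  · intro f _; funext i; simp [Fin.rev_rev]
  · intro f _; funext i; simp [Fin.rev_rev]

lemma compB_succ (m K l : ℕ) :
    compB m K (l + 1)
      = ∑ j : Fin (K + 1), if (j : ℕ) ≤ m then compB (m - (j : ℕ)) K l else 0 := by
  classical
  unfold compB
  rw [Finset.card_eq_sum_card_fiberwise (f := fun f => f 0) (t := Finset.univ)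
    (fun x _ => Finset.mem_univ _)]
  apply Finset.sum_congr rfl
  intro j _
  by_cases h : (j : ℕ) ≤ m
  · rw [if_pos h]
    refine Finset.card_bij' (fun f _ => Fin.tail f) (fun g _ => Fin.cons j g) ?_ ?_ ?_ ?_
    · intro f hf
      simp only [Finset.mem_filter, Finset.mem_univ, true_and] at hf ⊢
      obtain ⟨h1, h2⟩ := hf
      rw [Fin.sum_univ_succ, h2] at h1
      have he : ∑ i : Fin l, (Fin.tail f i : ℕ) = ∑ i : Fin l, (f i.succ : ℕ) := rfl
      omega
    · intro g hg
      simp only [Finset.mem_filter, Finset.mem_univ, true_and] at hg ⊢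
      refine ⟨?_, by simp⟩
      rw [Fin.sum_univ_succ]
      simp only [Fin.cons_zero, Fin.cons_succ]
      omega
    · intro f hf
      simp only [Finset.mem_filter, Finset.mem_univ, true_and] at hf
      show Fin.cons j (Fin.tail f) = f
      have hc := Fin.cons_self_tail (α := fun _ => Fin (K + 1)) f
      rw [hf.2] at hc
      exact hc
    · intro g _
      simp
  · rw [if_neg h, Finset.card_eq_zero, Finset.filter_eq_empty_iff]
    intro f hf
    simp only [Finset.mem_filter, Finset.mem_univ, true_and] at hf
    intro hfj
    have hle : (f 0 : ℕ) ≤ ∑ i, (f i : ℕ) :=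
      Finset.single_le_sum (f := fun i => (f i : ℕ)) (fun i _ => Nat.zero_le _)
        (Finset.mem_univ 0)
    rw [hfj, hf] at hle
    omega

/-- Integer-extended version of `compB`. -/
def gB (K l : ℕ) (n : ℤ) : ℤ := if 0 ≤ n then (compB n.toNat K l : ℤ) else 0

lemma gB_nat (K l m : ℕ) : gB K l (m : ℤ) = (compB m K l : ℤ) := by
  simp [gB]

lemma gB_succ (K l : ℕ) (m : ℕ) :
    gB K (l + 1) (m : ℤ) = ∑ j ∈ Finset.range (K + 1), gB K l ((m : ℤ) - j) := by
  rw [gB_nat, compB_succ]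
  push_cast
  rw [← Fin.sum_univ_eq_sum_range (fun j => gB K l ((m : ℤ) - j)) (K + 1)]
  apply Finset.sum_congr rfl
  intro j _
  unfold gB
  by_cases h : (j : ℕ) ≤ m
  · rw [if_pos h, if_pos (by omega : (0 : ℤ) ≤ (m : ℤ) - (j : ℕ))]
    have ht : ((m : ℤ) - (j : ℕ)).toNat = m - (j : ℕ) := by omega
    rw [ht]
  · rw [if_neg h, if_neg (by omega)]

lemma gB_key (d : ℕ) (n : ℕ) (hn : 1 ≤ n) :
    (compB n d (d + 1) : ℤ) - (compB (n - 1) d (d + 1) : ℤ)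
      = gB d d (n : ℤ) - gB d d ((n : ℤ) - d - 1) := by
  rw [← gB_nat, ← gB_nat, gB_succ, gB_succ, ← Finset.sum_sub_distrib]
  have hc : ∀ j ∈ Finset.range (d + 1),
      gB d d ((n : ℤ) - j) - gB d d (((n - 1 : ℕ) : ℤ) - j)
        = (fun j : ℕ => gB d d ((n : ℤ) - j)) j - (fun j : ℕ => gB d d ((n : ℤ) - j)) (j + 1) := by
    intro j _
    simp only
    congr 2
    push_cast
    omega
  rw [Finset.sum_congr rfl hc,
    Finset.sum_range_sub' (fun j : ℕ => gB d d ((n : ℤ) - j)) (d + 1)]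
  congr 2 <;> (push_cast; ring)

lemma stmt4_aux (d t : ℕ) (hd : 1 ≤ d) (ht : 2 * t = d * d + 3 * d + 2) :
    (compB (t - d - 1) d d : ℤ) - (compB (t - d) d d : ℤ)
      = (compB (t - d - 1) d (d + 1) : ℤ) - (compB (t - d - 2) d (d + 1) : ℤ) := by
  have hdd : d ≤ d * d := Nat.le_mul_of_pos_left d hd
  obtain ⟨m, rfl⟩ : ∃ m, t = m + d + 2 := ⟨t - d - 2, by omega⟩
  have e1 : m + d + 2 - d = m + 2 := by omega
  have e2 : m + d + 2 - d - 1 = m + 1 := by omega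
  have e3 : m + d + 2 - d - 2 = m := by omega
  rw [e3, e2, e1]
  have hkey := gB_key d (m + 1) (by omega)
  have em : (m + 1 : ℕ) - 1 = m := by omega
  rw [em, gB_nat] at hkey
  rw [hkey]
  have hfin : (compB (m + 2) d d : ℤ) = gB d d (((m + 1 : ℕ) : ℤ) - d - 1) := by
    rcases Nat.lt_or_ge d 2 with hd2 | hd2
    · have hd1 : d = 1 := by omega
      subst hd1
      have hm0 : m = 0 := by omega
      subst hm0
      show (compB 2 1 1 : ℤ) = gB 1 1 (1 - 1 - 1)
      have c1 : compB 2 1 1 = 0 := by decide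
      rw [c1]
      norm_num [gB]
    · have hq : 2 * d ≤ d * d := Nat.mul_le_mul_right d hd2
      have hcast : ((m + 1 : ℕ) : ℤ) - d - 1 = ((m - d : ℕ) : ℤ) := by
        push_cast; omega
      rw [hcast, gB_nat]
      have hsym : compB (m + 2) d d = compB (d * d - (m + 2)) d d :=
        compB_symm _ _ _ (by omega)
      have heq : d * d - (m + 2) = m - d := by omega
      rw [hsym, heq]
  rw [hfin]

/-- for every `d ≥ 1`, with `t = C(d+2, 2)`,
`b(t − d − 1, d, d) − b(t − d, d, d) = b(t − d − 1, d, d + 1) − b(t − d − 2, d, d + 1)`. -/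
theorem stmt4 (d : ℕ) (hd : 1 ≤ d) :
    (compB ((d + 2).choose 2 - d - 1) d d : ℤ) - (compB ((d + 2).choose 2 - d) d d : ℤ)
      = (compB ((d + 2).choose 2 - d - 1) d (d + 1) : ℤ)
        - (compB ((d + 2).choose 2 - d - 2) d (d + 1) : ℤ) := by
  apply stmt4_aux d _ hd
  have h2 : 2 ∣ (d + 2) * (d + 1) := by
    rcases Nat.even_or_odd d with h | h
    · obtain ⟨k, hk⟩ := h; exact ⟨(k + 1) * (d + 1), by subst hk; ring⟩
    · obtain ⟨k, hk⟩ := h; exact ⟨(d + 2) * (k + 1), by subst hk; ring⟩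
  rw [Nat.choose_two_right]
  have h3 : d + 2 - 1 = d + 1 := by omega
  rw [h3, Nat.mul_div_cancel' h2]
  ring
end

section
/- Let Δ be a d-dimensional simplicial complex with d ≥ 1 whose number of (d-1)-faces f_{d-1} is at least its number of d-faces f_d. Let J = I_Δ + (x_1^{d+2},...,x_n^{d+2}) in R = K[x_1,...,x_n]. Then with t = C(d+2,2), the Hilbert function satisfies HF_{R/J}(t-1) ≥ HF_{R/J}(t). -/
/-!
`J` is a monomial ideal, so `HF_{R/J}(u)` counts its standard monomials of degree `u`: those whose
support is a face `σ` of `Δ` and whose exponents are at most `d + 1`. Dividing such a monomial by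
`x_σ` leaves exponents in `{0, …, d}` on `σ`, so `HF_{R/J}(u) = ∑_{σ ∈ Δ} N_{|σ|}(u - |σ|)`, where
`N_s(v)` is the coefficient of `q^v` in `(1 + q + ⋯ + q^d)^s`. These coefficients are symmetric
about `sd/2` and unimodal. For `t = C(d+2, 2)` and `m = d(d+1)/2` the centre of `N_{d+1}`, passing
from degree `t - 1` to `t` the contribution of a face with `|σ| < d` does not grow, that of a
`d`-face grows by `δ = N_{d+1}(m) - N_{d+1}(m-1) ≥ 0`, and, by `N_{d+1}(v) = ∑_{j ≤ d} N_d(v - j)`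
and symmetry, that of a `(d-1)`-face drops by exactly `δ`. So `f_d ≤ f_{d-1}` gives the claim.
-/

open MvPolynomial

/-- The Stanley–Reisner ideal of a simplicial complex `Δ` on vertex set `Fin n`:
the ideal generated by the squarefree monomials `∏_{j ∈ τ} x_j` for non-faces `τ`. -/
noncomputable def SRIdeal (K : Type*) [Field K] (n : ℕ) (Δ : Finset (Finset (Fin n))) :
    Ideal (MvPolynomial (Fin n) K) :=
  Ideal.span {p | ∃ τ : Finset (Fin n), τ ∉ Δ ∧ p = ∏ j ∈ τ, X j}

/-- The Hilbert function of `R/J` in degree `t`: the dimension of the image of the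
space of homogeneous polynomials of degree `t` in the quotient `R/J`. -/
noncomputable def HF (K : Type*) [Field K] {n : ℕ} (J : Ideal (MvPolynomial (Fin n) K))
    (t : ℕ) : ℕ :=
  Module.finrank K (Submodule.map (Ideal.Quotient.mkₐ K J).toLinearMap
    (homogeneousSubmodule (Fin n) K t))

theorem le_of_symm_of_add_one_le {α : Type*} [Preorder α] {f : ℤ → α} {c : ℤ}
    (hsymm : ∀ v, f (c - v) = f v) (hstep : ∀ v, c ≤ 2 * v + 1 → f (v + 1) ≤ f v)
    {x y : ℤ} (hxy : x ≤ y) (hc : c ≤ x + y) : f y ≤ f x := by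
  have ray : ∀ a, c ≤ 2 * a → ∀ b, a ≤ b → f b ≤ f a := by
    intro a ha b hab
    induction b, hab using Int.leInduction with
    | base => exact le_rfl
    | succ b hab ih => exact (hstep b (by omega)).trans ih
  by_cases hx : c ≤ 2 * x
  · exact ray x hx y hxy
  · rw [← hsymm x]
    exact ray (c - x) (by omega) y (by omega)

/-- The number of `s`-tuples in `{0, …, d}` with sum `v`. -/
def boundedCompCount (d : ℕ) : ℕ → ℤ → ℕ
  | 0, v => if v = 0 then 1 else 0
  | s + 1, v => ∑ j ∈ Finset.range (d + 1), boundedCompCount d s (v - j)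

namespace boundedCompCount

variable {d : ℕ}

theorem eq_zero_of_neg : ∀ {s : ℕ} {v : ℤ}, v < 0 → boundedCompCount d s v = 0
  | 0, v, hv => if_neg hv.ne
  | s + 1, v, hv => Finset.sum_eq_zero fun j _ => eq_zero_of_neg (by omega)

theorem symm : ∀ (s : ℕ) (v : ℤ), boundedCompCount d s (s * d - v) = boundedCompCount d s v
  | 0, v => by simp [boundedCompCount]
  | s + 1, v => by
    rw [boundedCompCount, boundedCompCount, ← Finset.sum_range_reflect]
    refine Finset.sum_congr rfl fun j hj => ?_
    rw [← symm s]
    congr 1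
    have hj' : ((d + 1 - 1 - j : ℕ) : ℤ) = d - j := by
      have := Finset.mem_range.mp hj
      omega
    rw [hj']
    push_cast
    ring

theorem succ_add (s : ℕ) (v : ℤ) :
    boundedCompCount d (s + 1) (v + 1) + boundedCompCount d s (v - d) =
      boundedCompCount d (s + 1) v + boundedCompCount d s (v + 1) := by
  rw [boundedCompCount, boundedCompCount, Finset.sum_range_succ', Finset.sum_range_succ]
  simp only [Nat.cast_add, Nat.cast_one, Nat.cast_zero, sub_zero, add_sub_add_right_eq_sub]
  ring

theorem add_one_le : ∀ {s : ℕ} {v : ℤ}, s * d ≤ 2 * v + 1 →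
    boundedCompCount d s (v + 1) ≤ boundedCompCount d s v
  | 0, v, hv => by simp only [boundedCompCount]; split_ifs <;> omega
  | s + 1, v, hv => by
    have hrec := succ_add (d := d) s v
    have : boundedCompCount d s (v + 1) ≤ boundedCompCount d s (v - d) :=
      le_of_symm_of_add_one_le (symm s) (fun w hw => add_one_le hw) (by omega)
        (by push_cast at hv; linarith)
    omega

theorem le_of_le {s : ℕ} {x y : ℤ} (hxy : x ≤ y) (hc : s * d ≤ x + y) :
    boundedCompCount d s y ≤ boundedCompCount d s x :=
  le_of_symm_of_add_one_le (symm s) (fun _ hv => add_one_le hv) hxy hc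

theorem add_center_eq {m : ℤ} (hm : 2 * m = d * (d + 1)) :
    boundedCompCount d (d + 1) m + boundedCompCount d d (m + 1) =
      boundedCompCount d (d + 1) (m - 1) + boundedCompCount d d m := by
  have h := succ_add (d := d) d (m - 1)
  rw [sub_add_cancel] at h
  rw [← symm d (m + 1)]
  convert h using 3
  linarith

theorem center_sub_one_le {m : ℤ} (hm : 2 * m = d * (d + 1)) :
    boundedCompCount d (d + 1) (m - 1) ≤ boundedCompCount d (d + 1) m := by
  rw [← symm (d + 1) (m - 1)]
  exact le_of_le (by push_cast; linarith) (by push_cast; linarith)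

end boundedCompCount

open boundedCompCount in
theorem sum_boundedCompCount_le {ι : Type*} (Δ : Finset (Finset ι)) {d t : ℕ}
    (ht : 2 * t = (d + 1) * (d + 2)) (hdim : ∀ σ ∈ Δ, σ.card ≤ d + 1)
    (hf : (Δ.filter fun σ => σ.card = d + 1).card ≤ (Δ.filter fun σ => σ.card = d).card) :
    ∑ σ ∈ Δ, boundedCompCount d σ.card (t - σ.card) ≤
      ∑ σ ∈ Δ, boundedCompCount d σ.card (t - 1 - σ.card) := by
  set m : ℤ := t - (d + 1) with hm_def
  have hm : 2 * m = d * (d + 1) := by rw [hm_def]; nlinarith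
  set δ : ℤ := boundedCompCount d (d + 1) m - boundedCompCount d (d + 1) (m - 1)
  have hδ : 0 ≤ δ := sub_nonneg.mpr (by exact_mod_cast center_sub_one_le hm)
  have pointwise : ∀ σ ∈ Δ,
      δ * ((if σ.card = d then 1 else 0) - (if σ.card = d + 1 then 1 else 0)) ≤
        (boundedCompCount d σ.card (t - 1 - σ.card) : ℤ) -
          boundedCompCount d σ.card (t - σ.card) := by
    intro σ hσ
    obtain hs | hs | hs : σ.card = d + 1 ∨ σ.card = d ∨ σ.card < d := by
      have := hdim σ hσ; omega
    · have h1 : (t : ℤ) - (d + 1 : ℕ) = m := by push_cast; ring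
      have h2 : (t : ℤ) - 1 - (d + 1 : ℕ) = m - 1 := by push_cast; ring
      simp only [hs, h1, h2, if_pos, if_neg (by omega : d + 1 ≠ d)]
      omega
    · have hc := add_center_eq hm
      have h1 : (t : ℤ) - d = m + 1 := by ring
      have h2 : (t : ℤ) - 1 - d = m := by ring
      simp only [hs, h1, h2, if_pos, if_neg (by omega : d ≠ d + 1)]
      omega
    · have : boundedCompCount d σ.card (t - σ.card) ≤ boundedCompCount d σ.card (t - 1 - σ.card) :=
        le_of_le (by omega) (by nlinarith)
      simp only [if_neg hs.ne, if_neg (by omega : σ.card ≠ d + 1)]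
      omega
  have hsum := Finset.sum_le_sum pointwise
  rw [← Finset.mul_sum, Finset.sum_sub_distrib, Finset.sum_sub_distrib, Finset.sum_boole,
    Finset.sum_boole] at hsum
  have : 0 ≤ δ * (((Δ.filter fun σ => σ.card = d).card : ℤ) -
      (Δ.filter fun σ => σ.card = d + 1).card) := mul_nonneg hδ (by omega)
  zify
  linarith

section MonomialsWithSupport

variable {ι : Type*} [DecidableEq ι]

def monomialsWithSupport (d : ℕ) (σ : Finset ι) (u : ℕ) : Finset (ι →₀ ℕ) :=
  (σ.finsuppAntidiag u).filter fun m => m.support = σ ∧ ∀ i ∈ σ, m i ≤ d + 1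

variable {d : ℕ}

theorem mem_monomialsWithSupport {σ : Finset ι} {u : ℕ} {m : ι →₀ ℕ} :
    m ∈ monomialsWithSupport d σ u ↔ m.support = σ ∧ (∀ i ∈ σ, m i ≤ d + 1) ∧ m.degree = u := by
  rw [monomialsWithSupport, Finset.mem_filter, Finset.mem_finsuppAntidiag']
  constructor
  · rintro ⟨⟨hu, -⟩, hσ, hd⟩
    exact ⟨hσ, hd, hu⟩
  · rintro ⟨hσ, hd, hu⟩
    exact ⟨⟨hu, hσ.le⟩, hσ, hd⟩

theorem filter_apply_eq_monomialsWithSupport_insert {a : ι} {σ : Finset ι} (ha : a ∉ σ)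
    {k : ℕ} (hk : k ≤ d + 1) (hk0 : k ≠ 0) (w : ℕ) :
    (monomialsWithSupport d (insert a σ) (w + k)).filter (fun m => m a = k) =
      (monomialsWithSupport d σ w).map (addRightEmbedding (Finsupp.single a k)) := by
  ext m
  simp only [Finset.mem_filter, Finset.mem_map, mem_monomialsWithSupport, addRightEmbedding_apply]
  constructor
  · rintro ⟨⟨hsupp, hbd, hdeg⟩, hma⟩
    refine ⟨m.erase a, ⟨?_, fun i hi => ?_, ?_⟩, ?_⟩
    · rw [Finsupp.support_erase, hsupp, Finset.erase_insert ha]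
    · rw [Finsupp.erase_ne (ne_of_mem_of_not_mem hi ha)]
      exact hbd i (Finset.mem_insert_of_mem hi)
    · have h := congrArg Finsupp.degree (Finsupp.erase_add_single a m)
      rw [map_add, Finsupp.degree_single, hma, hdeg] at h
      omega
    · rw [← hma, Finsupp.erase_add_single]
  · rintro ⟨m', ⟨hsupp, hbd, hdeg⟩, rfl⟩
    have hm'a : m' a = 0 := Finsupp.notMem_support_iff.mp (hsupp ▸ ha)
    refine ⟨⟨?_, fun i hi => ?_, ?_⟩, ?_⟩
    · ext i
      rcases eq_or_ne i a with rfl | hia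
      · simp [hm'a, hk0]
      · simp [hia, ← hsupp]
    · rcases Finset.mem_insert.mp hi with rfl | hi
      · simpa [hm'a] using hk
      · simpa [Finsupp.single_apply, ne_of_mem_of_not_mem hi ha] using hbd i hi
    · rw [map_add, Finsupp.degree_single, hdeg]
    · simp [hm'a]

theorem card_monomialsWithSupport (σ : Finset ι) (u : ℕ) :
    (monomialsWithSupport d σ u).card = boundedCompCount d σ.card (u - σ.card) := by
  induction σ using Finset.induction_on generalizing u with
  | empty =>
    rcases eq_or_ne u 0 with rfl | hu
    · simp [monomialsWithSupport, boundedCompCount, Finset.filter_singleton]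
    · simp [monomialsWithSupport, boundedCompCount, hu]
  | @insert a σ ha ih =>
    have hmaps : ((monomialsWithSupport d (insert a σ) u : Set (ι →₀ ℕ))).MapsTo
        (fun m => m a - 1) (Finset.range (d + 1)) := by
      intro m hm
      have := (mem_monomialsWithSupport.mp hm).2.1 a (Finset.mem_insert_self a σ)
      simp only [Finset.coe_range, Set.mem_Iio]
      omega
    rw [Finset.card_eq_sum_card_fiberwise hmaps, Finset.card_insert_of_notMem ha, boundedCompCount]
    refine Finset.sum_congr rfl fun j hj => ?_
    have hfiber : (monomialsWithSupport d (insert a σ) u).filter (fun m => m a - 1 = j) =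
        (monomialsWithSupport d (insert a σ) u).filter (fun m => m a = j + 1) := by
      refine Finset.filter_congr fun m hm => ?_
      have := Finsupp.mem_support_iff.mp
        ((mem_monomialsWithSupport.mp hm).1 ▸ Finset.mem_insert_self a σ)
      omega
    rw [hfiber]
    by_cases hju : j + 1 ≤ u
    · obtain ⟨w, rfl⟩ := Nat.exists_eq_add_of_le' hju
      rw [filter_apply_eq_monomialsWithSupport_insert ha (by simpa using hj) (by omega),
        Finset.card_map, ih]
      congr 1
      push_cast
      ring
    · rw [Finset.card_eq_zero.mpr, boundedCompCount.eq_zero_of_neg (by omega)]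
      refine Finset.filter_eq_empty_iff.mpr fun m hm hma => hju ?_
      rw [← hma, ← (mem_monomialsWithSupport.mp hm).2.2]
      exact Finsupp.le_degree a m

end MonomialsWithSupport

theorem HF_span_monomial (K : Type*) [Field K] {n : ℕ} (S : Set (Fin n →₀ ℕ)) (u : ℕ) :
    HF K (Ideal.span ((fun s => monomial s (1 : K)) '' S)) u =
      {m : Fin n →₀ ℕ | m.degree = u ∧ ∀ s ∈ S, ¬ s ≤ m}.ncard := by
  set J := Ideal.span ((fun s => monomial s (1 : K)) '' S)
  set f := (Ideal.Quotient.mkₐ K J).toLinearMap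
  set std := {m : Fin n →₀ ℕ | m.degree = u ∧ ∀ s ∈ S, ¬ s ≤ m}
  set rest := {m : Fin n →₀ ℕ | m.degree = u ∧ ¬ ∀ s ∈ S, ¬ s ≤ m}
  have hsplit :
      homogeneousSubmodule (Fin n) K u = restrictSupport K std ⊔ restrictSupport K rest := by
    have : {m : Fin n →₀ ℕ | m.degree = u} = std ∪ rest := by
      ext m; simp only [std, rest, Set.mem_ofPred_eq, Set.mem_union]; tauto
    rw [homogeneousSubmodule_eq_finsupp_supported, ← restrictSupport, this,
      restrictSupport_eq_span, restrictSupport_eq_span, restrictSupport_eq_span, Set.image_union,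
      Submodule.span_union]
  have hrest : Submodule.map f (restrictSupport K rest) = ⊥ := by
    rw [← LinearMap.le_ker_iff_map, restrictSupport_eq_span, Submodule.span_le,
      Set.image_subset_iff]
    rintro m ⟨-, hm⟩
    push Not at hm
    obtain ⟨s, hs, hsm⟩ := hm
    rw [Set.mem_preimage, SetLike.mem_coe, LinearMap.mem_ker, AlgHom.toLinearMap_apply,
      Ideal.Quotient.mkₐ_eq_mk, Ideal.Quotient.eq_zero_iff_mem, mem_ideal_span_monomial_image]
    intro xi hxi
    exact ⟨s, hs, Finset.mem_singleton.mp (support_monomial_subset hxi) ▸ hsm⟩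
  have hdisj : Disjoint (restrictSupport K std) (LinearMap.ker f) := by
    rw [Submodule.disjoint_def]
    intro p hp hpJ
    rw [LinearMap.mem_ker, AlgHom.toLinearMap_apply, Ideal.Quotient.mkₐ_eq_mk,
      Ideal.Quotient.eq_zero_iff_mem, mem_ideal_span_monomial_image] at hpJ
    rw [← support_eq_empty, Finset.eq_empty_iff_forall_notMem]
    intro xi hxi
    obtain ⟨s, hs, hsxi⟩ := hpJ xi hxi
    exact ((show ↑p.support ⊆ std from hp) hxi).2 s hs hsxi
  rw [HF, hsplit, Submodule.map_sup, hrest, sup_bot_eq, ← LinearMap.range_domRestrict,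
    LinearMap.finrank_range_of_inj (LinearMap.injective_domRestrict_iff.mpr hdisj),
    Module.finrank_eq_nat_card_basis (basisRestrictSupport K std), Nat.card_coe_set_eq]

theorem sum_single_one_le_iff {ι : Type*} [DecidableEq ι] (τ : Finset ι) (m : ι →₀ ℕ) :
    ∑ j ∈ τ, Finsupp.single j 1 ≤ m ↔ τ ⊆ m.support := by
  simp only [Finsupp.le_def, Finset.subset_iff, Finset.sum_apply', Finsupp.single_apply,
    Finset.sum_ite_eq', Finsupp.mem_support_iff]
  refine ⟨fun h i hi => ?_, fun h i => ?_⟩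
  · have := h i
    rw [if_pos hi] at this
    omega
  · split_ifs with hi
    · exact Nat.one_le_iff_ne_zero.mpr (h hi)
    · exact Nat.zero_le _

/-- Exponent vectors of the monomial generators of `I_Δ + (x_i ^ e)`. -/
def generatorExponents {ι : Type*} [DecidableEq ι] (Δ : Finset (Finset ι)) (e : ℕ) :
    Set (ι →₀ ℕ) :=
  (fun τ => ∑ j ∈ τ, Finsupp.single j 1) '' {τ | τ ∉ Δ} ∪ Set.range fun i => Finsupp.single i e

theorem SRIdeal_sup_span_X_pow (K : Type*) [Field K] {n : ℕ} (Δ : Finset (Finset (Fin n)))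
    (e : ℕ) :
    SRIdeal K n Δ ⊔ Ideal.span (Set.range fun i : Fin n => (X i : MvPolynomial (Fin n) K) ^ e) =
      Ideal.span ((fun s => monomial s (1 : K)) '' generatorExponents Δ e) := by
  rw [SRIdeal, generatorExponents, ← Ideal.span_union, Set.image_union, Set.image_image,
    ← Set.range_comp]
  congr 2
  · ext p
    simp [monomial_sum_one, ← X_pow_eq_monomial, eq_comm]
  · ext p
    simp [X_pow_eq_monomial]

theorem forall_generatorExponents_not_le_iff {ι : Type*} [DecidableEq ι]
    {Δ : Finset (Finset ι)} (hdown : ∀ σ ∈ Δ, ∀ τ ⊆ σ, τ ∈ Δ) (e : ℕ) (m : ι →₀ ℕ) :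
    (∀ s ∈ generatorExponents Δ e, ¬ s ≤ m) ↔ m.support ∈ Δ ∧ ∀ i, m i < e := by
  simp only [generatorExponents, Set.mem_union, or_imp, forall_and, Set.forall_mem_image,
    Set.forall_mem_range, Set.mem_ofPred_eq, sum_single_one_le_iff, Finsupp.single_le_iff, not_le]
  refine and_congr_left fun _ => ⟨fun h => ?_, fun hm τ hτ hτm => hτ (hdown _ hm τ hτm)⟩
  by_contra hm
  exact h hm subset_rfl

theorem HF_SRIdeal_sup_span_X_pow (K : Type*) [Field K] {n : ℕ} {Δ : Finset (Finset (Fin n))}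
    (hdown : ∀ σ ∈ Δ, ∀ τ ⊆ σ, τ ∈ Δ) (d u : ℕ) :
    HF K (SRIdeal K n Δ ⊔
        Ideal.span (Set.range fun i : Fin n => (X i : MvPolynomial (Fin n) K) ^ (d + 2))) u =
      ∑ σ ∈ Δ, boundedCompCount d σ.card (u - σ.card) := by
  rw [SRIdeal_sup_span_X_pow, HF_span_monomial]
  have hcard : (Δ.biUnion fun σ => monomialsWithSupport d σ u).card =
      ∑ σ ∈ Δ, boundedCompCount d σ.card (u - σ.card) := by
    rw [Finset.card_biUnion]
    · exact Finset.sum_congr rfl fun σ _ => card_monomialsWithSupport σ u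
    · intro σ _ τ _ hστ
      refine Finset.disjoint_left.mpr fun m hσ hτ => hστ ?_
      exact (mem_monomialsWithSupport.mp hσ).1.symm.trans (mem_monomialsWithSupport.mp hτ).1
  rw [← hcard, ← Set.ncard_coe_finset]
  congr 1
  ext m
  simp only [Set.mem_ofPred_eq, forall_generatorExponents_not_le_iff hdown, Finset.coe_biUnion,
    Set.mem_iUnion, Finset.mem_coe, mem_monomialsWithSupport, exists_prop]
  constructor
  · rintro ⟨hu, hΔ, hbd⟩
    exact ⟨_, hΔ, rfl, fun i _ => Nat.le_of_lt_succ (hbd i), hu⟩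
  · rintro ⟨σ, hσ, rfl, hbd, hu⟩
    refine ⟨hu, hσ, fun i => ?_⟩
    by_cases hi : i ∈ m.support
    · exact Nat.lt_succ_of_le (hbd i hi)
    · rw [Finsupp.notMem_support_iff.mp hi]
      omega

theorem stmt5_general (K : Type*) [Field K] (n d : ℕ)
    (Δ : Finset (Finset (Fin n)))
    (hdown : ∀ σ ∈ Δ, ∀ τ ⊆ σ, τ ∈ Δ)
    (hdim : ∀ σ ∈ Δ, σ.card ≤ d + 1)
    (hf : (Δ.filter fun σ => σ.card = d + 1).card ≤ (Δ.filter fun σ => σ.card = d).card) :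
    HF K (SRIdeal K n Δ ⊔
        Ideal.span (Set.range fun i : Fin n => (X i : MvPolynomial (Fin n) K) ^ (d + 2)))
        ((d + 2).choose 2)
      ≤ HF K (SRIdeal K n Δ ⊔
        Ideal.span (Set.range fun i : Fin n => (X i : MvPolynomial (Fin n) K) ^ (d + 2)))
        ((d + 2).choose 2 - 1) := by
  have ht : 2 * (d + 2).choose 2 = (d + 1) * (d + 2) := by
    rw [Nat.choose_two_right, Nat.mul_div_cancel' (Nat.even_mul_pred_self (d + 2)).two_dvd]
    simp [mul_comm]
  set t := (d + 2).choose 2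
  have ht1 : ((t - 1 : ℕ) : ℤ) = t - 1 := by
    have : 1 ≤ t := by nlinarith
    omega
  rw [HF_SRIdeal_sup_span_X_pow K hdown, HF_SRIdeal_sup_span_X_pow K hdown, ht1]
  exact sum_boundedCompCount_le Δ ht hdim hf

/-- if `Δ` is a `d`-dimensional simplicial complex (`d ≥ 1`) with
`f_{d-1} ≥ f_d`, and `J = I_Δ + (x_1^{d+2}, …, x_n^{d+2})`, then with `t = C(d+2,2)`,
`HF_{R/J}(t-1) ≥ HF_{R/J}(t)`. -/
theorem stmt5 (K : Type*) [Field K] (n d : ℕ) (hd : 1 ≤ d)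
    (Δ : Finset (Finset (Fin n)))
    (hdown : ∀ σ ∈ Δ, ∀ τ ⊆ σ, τ ∈ Δ)
    (hdim : ∀ σ ∈ Δ, σ.card ≤ d + 1)
    (hface : ∃ σ ∈ Δ, σ.card = d + 1)
    (hf : (Δ.filter fun σ => σ.card = d + 1).card ≤ (Δ.filter fun σ => σ.card = d).card) :
    HF K (SRIdeal K n Δ ⊔
        Ideal.span (Set.range fun i : Fin n => (X i : MvPolynomial (Fin n) K) ^ (d + 2)))
        ((d + 2).choose 2)
      ≤ HF K (SRIdeal K n Δ ⊔
        Ideal.span (Set.range fun i : Fin n => (X i : MvPolynomial (Fin n) K) ^ (d + 2)))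
        ((d + 2).choose 2 - 1) :=
  stmt5_general K n d Δ hdown hdim hf
end

section
/- Let I = (f_1,...,f_n) ⊂ R = K[x_1,...,x_n] be a homogeneous complete intersection (so R/I is a finite-dimensional K-vector space), and suppose that for every d-dimensional simplicial complex Δ on n vertices, f_i ∈ I_Δ for every i > d+1. Then for any d-dimensional simplicial complex Δ, the sequence f_1,...,f_{d+1} is a system of parameters for R/I_Δ, i.e., R/(I_Δ + (f_1,...,f_{d+1})) is a finite-dimensional K-vector space. -/
open MvPolynomial

/-- A `d`-dimensional simplicial complex on `Fin n`: nonempty, downward closed,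
all faces of cardinality at most `d+1`, and some face of cardinality `d+1`. -/
def IsComplexOfDim {n : ℕ} (Δ : Finset (Finset (Fin n))) (d : ℕ) : Prop :=
  (∅ : Finset (Fin n)) ∈ Δ ∧ (∀ σ ∈ Δ, ∀ τ ⊆ σ, τ ∈ Δ) ∧
    (∀ σ ∈ Δ, σ.card ≤ d + 1) ∧ (∃ σ ∈ Δ, σ.card = d + 1)

/-- let `I = (f_1, …, f_n)` be a homogeneous complete intersection (so `R/I` is a
finite-dimensional `K`-vector space), and suppose `f_i ∈ I_Δ` for every `d`-dimensional complex
`Δ` and every `i > d + 1`.  Then `f_1, …, f_{d+1}` is a system of parameters for `R/I_Δ` for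
every `d`-dimensional complex `Δ`. -/
theorem stmt8 (K : Type*) [Field K] (n d : ℕ)
    (f : Fin n → MvPolynomial (Fin n) K) (deg : Fin n → ℕ)
    (hhom : ∀ i, f i ∈ homogeneousSubmodule (Fin n) K (deg i))
    (hci : FiniteDimensional K (MvPolynomial (Fin n) K ⧸ Ideal.span (Set.range f)))
    (hmem : ∀ Δ : Finset (Finset (Fin n)), IsComplexOfDim Δ d →
      ∀ i : Fin n, d + 1 < (i : ℕ) + 1 → f i ∈ SRIdeal K n Δ) :
    ∀ Δ : Finset (Finset (Fin n)), IsComplexOfDim Δ d →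
      FiniteDimensional K (MvPolynomial (Fin n) K ⧸
        (SRIdeal K n Δ ⊔ Ideal.span {p | ∃ i : Fin n, (i : ℕ) + 1 ≤ d + 1 ∧ p = f i})) := by
  intro Δ hΔ
  let J : Ideal (MvPolynomial (Fin n) K) :=
    SRIdeal K n Δ ⊔ Ideal.span {p | ∃ i : Fin n, (i : ℕ) + 1 ≤ d + 1 ∧ p = f i}
  have hle : Ideal.span (Set.range f) ≤ J := by
    rw [Ideal.span_le]
    intro p hp
    obtain ⟨i, hi⟩ := hp
    rw [← hi]
    by_cases h : (i : ℕ) + 1 ≤ d + 1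
    · exact Ideal.mem_sup_right (Ideal.subset_span ⟨i, h, rfl⟩)
    · exact Ideal.mem_sup_left (hmem Δ hΔ i (lt_of_not_ge h))
  let φ : ((MvPolynomial (Fin n) K) ⧸ Ideal.span (Set.range f)) →ₐ[K] ((MvPolynomial (Fin n) K) ⧸ J) :=
    Ideal.quotientMapₐ J (AlgHom.id K (MvPolynomial (Fin n) K)) (by simpa using hle)
  have hsurj : Function.Surjective φ.toLinearMap := by
    intro x
    obtain ⟨y, rfl⟩ := Ideal.Quotient.mk_surjective x
    refine ⟨Ideal.Quotient.mk _ y, ?_⟩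
    simp [φ, Ideal.quotientMapₐ]
  exact Module.Finite.of_surjective φ.toLinearMap hsurj
end

section
/- For 1 ≤ d+1 ≤ n, the elementary symmetric polynomials e_1,...,e_{d+1} in x_1,...,x_n form a system of parameters for R/I_Δ for every d-dimensional simplicial complex Δ on n vertices; i.e., R/(I_Δ + (e_1,...,e_{d+1})) is a finite-dimensional K-vector space. -/
open MvPolynomial

/-- for `1 ≤ d + 1 ≤ n`, the elementary symmetric polynomials
`e_1, …, e_{d+1}` form a system of parameters for `R/I_Δ` for every `d`-dimensional
simplicial complex `Δ` on `n` vertices. -/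
theorem stmt9 (K : Type*) [Field K] (n d : ℕ) (hdn : d + 1 ≤ n)
    (Δ : Finset (Finset (Fin n)))
    (hempty : (∅ : Finset (Fin n)) ∈ Δ)
    (hdown : ∀ σ ∈ Δ, ∀ τ ⊆ σ, τ ∈ Δ)
    (hdim : ∀ σ ∈ Δ, σ.card ≤ d + 1)
    (hface : ∃ σ ∈ Δ, σ.card = d + 1) :
    FiniteDimensional K (MvPolynomial (Fin n) K ⧸
      (SRIdeal K n Δ ⊔
        Ideal.span {p | ∃ i : ℕ, 1 ≤ i ∧ i ≤ d + 1 ∧ p = esymm (Fin n) K i})) := by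
  classical
  set J := SRIdeal K n Δ ⊔
      Ideal.span {p | ∃ i : ℕ, 1 ≤ i ∧ i ≤ d + 1 ∧ p = esymm (Fin n) K i} with hJdef
  -- All esymm's with 1 ≤ i lie in J.
  have hesymm : ∀ i : ℕ, 1 ≤ i → esymm (Fin n) K i ∈ J := by
    intro i h1
    by_cases hi : i ≤ d + 1
    · exact Ideal.mem_sup_right (Ideal.subset_span ⟨i, h1, hi, rfl⟩)
    · apply Ideal.mem_sup_left
      rw [esymm]
      apply Ideal.sum_mem
      intro τ hτ
      rw [Finset.mem_powersetCard] at hτ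
      apply Ideal.subset_span
      refine ⟨τ, fun hmem => ?_, rfl⟩
      have := hdim τ hmem
      omega
  -- Each X j ^ n lies in J.
  have hXn : ∀ j : Fin n, (X j : MvPolynomial (Fin n) K) ^ n ∈ J := by
    intro j
    have hVieta := congrArg (Polynomial.eval (-(X j : MvPolynomial (Fin n) K)))
      (MvPolynomial.prod_C_add_X_eq_sum_esymm K (Fin n))
    simp only [Polynomial.eval_prod, Polynomial.eval_add, Polynomial.eval_X,
      Polynomial.eval_C, Polynomial.eval_finset_sum, Polynomial.eval_mul,
      Polynomial.eval_pow, Fintype.card_fin] at hVieta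
    have hzero : (∏ i : Fin n, (-(X j : MvPolynomial (Fin n) K) + X i)) = 0 :=
      Finset.prod_eq_zero (Finset.mem_univ j) (by ring)
    rw [hzero] at hVieta
    have hsum : (∑ k ∈ Finset.range (n + 1),
        esymm (Fin n) K k * (-(X j : MvPolynomial (Fin n) K)) ^ (n - k)) = 0 := hVieta.symm
    rw [Finset.sum_range_succ'] at hsum
    have hmem : (∑ k ∈ Finset.range n,
        esymm (Fin n) K (k + 1) * (-(X j : MvPolynomial (Fin n) K)) ^ (n - (k + 1))) ∈ J :=
      Ideal.sum_mem _ fun k _ =>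
        Ideal.mul_mem_right _ _ (hesymm (k + 1) (Nat.succ_le_succ (Nat.zero_le k)))
    have hneg : (esymm (Fin n) K 0 * (-(X j : MvPolynomial (Fin n) K)) ^ (n - 0)) ∈ J := by
      have : esymm (Fin n) K 0 * (-(X j : MvPolynomial (Fin n) K)) ^ (n - 0) =
          -(∑ k ∈ Finset.range n,
            esymm (Fin n) K (k + 1) * (-(X j : MvPolynomial (Fin n) K)) ^ (n - (k + 1))) := by
        linear_combination hsum
      rw [this]
      exact neg_mem hmem
    have hnegXn : (-(X j : MvPolynomial (Fin n) K)) ^ n ∈ J := by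
      simpa [esymm_zero] using hneg
    have : (X j : MvPolynomial (Fin n) K) ^ n =
        (-1 : MvPolynomial (Fin n) K) ^ n * (-(X j)) ^ n := by
      rw [neg_pow]; ring_nf; simp [pow_mul]
      rcases Nat.even_or_odd n with h | h
      · left; exact h.neg_one_pow
      · right; exact h.neg_one_pow
    rw [this]
    exact Ideal.mul_mem_left _ _ hnegXn
  -- The quotient is generated, as a K-algebra, by the nilpotent images of the X j.
  let Q := MvPolynomial (Fin n) K ⧸ J
  let f : MvPolynomial (Fin n) K →ₐ[K] Q := Ideal.Quotient.mkₐ K J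
  have hn1 : 1 ≤ n := le_trans (Nat.succ_le_succ (Nat.zero_le d)) hdn
  have hint : ∀ y ∈ f '' Set.range (X : Fin n → MvPolynomial (Fin n) K), IsIntegral K y := by
    rintro y ⟨p, ⟨j, rfl⟩, rfl⟩
    refine ⟨Polynomial.X ^ n, Polynomial.monic_X_pow n, ?_⟩
    have : (f (X j)) ^ n = 0 := by
      rw [← map_pow]
      exact (Ideal.Quotient.eq_zero_iff_mem).2 (hXn j)
    rw [Polynomial.eval₂_X_pow]; exact this
  have htop : Algebra.adjoin K (f '' Set.range (X : Fin n → MvPolynomial (Fin n) K)) = ⊤ := by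
    rw [← AlgHom.map_adjoin, MvPolynomial.adjoin_range_X, Algebra.map_top,
      (AlgHom.range_eq_top _).2 (Ideal.Quotient.mkₐ_surjective K J)]
  have hfg : (Subalgebra.toSubmodule (Algebra.adjoin K
      (f '' Set.range (X : Fin n → MvPolynomial (Fin n) K)))).FG :=
    fg_adjoin_of_finite ((Set.finite_range _).image f) hint
  rw [htop] at hfg
  exact ⟨by rwa [Algebra.top_toSubmodule] at hfg⟩
end

section
/- Let Δ be a d-dimensional simplicial complex on n vertices with facets of dimension d given by F_1,...,F_s, over a field K, and let F = c_1 F_1 + ... + c_s F_s be a nonzero d-cycle, i.e., a nonzero element of the top simplicial homology H_d(Δ; K). Then the polynomial F_Δ = Σ_{i=1}^s c_i · x_{F_i} · V(F_i), where x_{F_i} = ∏_{j∈F_i} x_j and V(F_i) = ∏_{j<k, j,k∈F_i}(x_j − x_k), is annihilated under contraction by every generator of I_Δ and by every elementary symmetric polynomial e_1,...,e_{d+1}. In particular F_Δ is a nonzero element of the inverse system (I_Δ + (e_1,...,e_{d+1}))^{-1} in degree C(d+2,2). -/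
/-!
Contracting `x_F V(F)` by a squarefree monomial `x_τ` divides it by `x_τ` if `τ ⊆ F` and kills
it otherwise. As `Δ` is closed under subsets, `x_τ` with `τ ∉ Δ` therefore kills every summand
of `F_Δ`, and `e_k` sends `x_F V(F)` to `e_{d+1-k}(F) V(F)`. Expanding Vandermonde-type determinants along their first column gives,
for `m ≤ d`,
  `e_m(F) V(F) = ± ∑_{v ∈ F} (-1)^(position of v in F) x_{F∖v} e_m(F∖v) V(F∖v)`,
i.e. `e_m(F) V(F)` is the image of the boundary `∂F` under the linear map
`τ ↦ x_τ e_m(τ) V(τ)`; it therefore vanishes on the cycle `∑ c_i F_i`. Finally, every monomial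
of `x_F V(F)` has support exactly `F`, so these polynomials are linearly independent.
-/

open MvPolynomial

/-- Contraction action of `R` on `S` (identifying `y_j ↔ x_j`). -/
noncomputable def contract {K : Type*} [Field K] {n : ℕ}
    (f p : MvPolynomial (Fin n) K) : MvPolynomial (Fin n) K :=
  ∑ a ∈ f.support, f.coeff a • p.divMonomial a

/-- The coefficient of the (d−1)-face `τ` in the simplicial boundary of the facet `F`
(vertices ordered by the canonical order on `Fin n`): if `τ ⊆ F`, it is `(-1)^j` where
`j` is the position in `F` of the vertex removed, and `0` otherwise. -/
def bdryCoeff {n : ℕ} (F τ : Finset (Fin n)) : ℤ :=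
  if τ ⊆ F then ∑ v ∈ F \ τ, (-1) ^ ((F.filter fun w => w < v).card) else 0

/-- `x_F · V(F)`: the product of the variables in `F` times the Vandermonde determinant
on the variables indexed by `F`. -/
noncomputable def xFV {K : Type*} [Field K] {n : ℕ} (F : Finset (Fin n)) :
    MvPolynomial (Fin n) K :=
  (∏ j ∈ F, X j) * ∏ j ∈ F, ∏ k ∈ F.filter (fun k => j < k), (X j - X k)

open Finset Matrix

theorem Multiset.esymm_cons_succ {R : Type*} [CommSemiring R] (a : R) (s : Multiset R) (m : ℕ) :
    (a ::ₘ s).esymm (m + 1) = s.esymm (m + 1) + a * s.esymm m := by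
  simp [Multiset.esymm, Multiset.powersetCard_cons, Multiset.sum_map_mul_left]

section Vandermonde

variable {R : Type*} [CommRing R] {c : ℕ}

theorem esymm_map_univ_succAbove (v : Fin (c + 1) → R) (i : Fin (c + 1)) (m : ℕ) :
    (univ.val.map v).esymm (m + 1) = (univ.val.map (v ∘ i.succAbove)).esymm (m + 1) +
      v i * (univ.val.map (v ∘ i.succAbove)).esymm m := by
  rw [Fin.univ_succAbove c i, Finset.cons_val, Multiset.map_cons, Multiset.esymm_cons_succ]
  simp [Function.comp_def]

theorem det_vandermonde_eq_sum_succAbove (v : Fin (c + 1) → R) :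
    (vandermonde v).det =
      ∑ i : Fin (c + 1), (-1) ^ (i : ℕ) *
        ((∏ j, v (i.succAbove j)) * (vandermonde (v ∘ i.succAbove)).det) := by
  rw [det_succ_column_zero]
  refine sum_congr rfl fun i _ => ?_
  have hsub : (vandermonde v).submatrix i.succAbove Fin.succ =
      of fun a b => v (i.succAbove a) * vandermonde (v ∘ i.succAbove) a b := by
    ext a b
    simp [pow_succ']
  rw [hsub, det_mul_column, vandermonde_apply, Fin.val_zero, pow_zero, mul_one]

theorem sum_pow_mul_det_vandermonde_succAbove {r : ℕ} (hr : r < c) (v : Fin (c + 1) → R) :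
    ∑ i : Fin (c + 1), (-1) ^ (i : ℕ) * (v i ^ r * (vandermonde (v ∘ i.succAbove)).det) = 0 := by
  -- the first column `v i ^ r` of `M` repeats its column `r + 1`
  set M : Matrix (Fin (c + 1)) (Fin (c + 1)) R :=
    of fun i => Fin.cons (v i ^ r) fun j => v i ^ (j : ℕ)
  have hM : M.det = 0 :=
    det_zero_of_column_eq (Fin.succ_ne_zero ⟨r, hr⟩).symm fun k => by
      simp only [M, of_apply, Fin.cons_zero, Fin.cons_succ]
  rw [det_succ_column_zero] at hM
  rw [← hM]
  refine sum_congr rfl fun i _ => ?_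
  have hsub : M.submatrix i.succAbove Fin.succ = vandermonde (v ∘ i.succAbove) := by
    ext a b
    simp [M]
  simp [hsub, M, mul_assoc]

theorem sum_pow_mul_esymm_mul_det_vandermonde_succAbove (v : Fin (c + 1) → R) :
    ∀ m r : ℕ, m + r < c →
      ∑ i : Fin (c + 1), (-1) ^ (i : ℕ) * (v i ^ r *
        ((univ.val.map (v ∘ i.succAbove)).esymm m * (vandermonde (v ∘ i.succAbove)).det)) = 0
  | 0, r, h => by
    simpa [Multiset.esymm] using sum_pow_mul_det_vandermonde_succAbove (by omega) v
  | m + 1, r, h => by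
    have hrec := sum_pow_mul_esymm_mul_det_vandermonde_succAbove v m (r + 1) (by omega)
    have hpow := sum_pow_mul_det_vandermonde_succAbove (R := R) (r := r) (by omega) v
    calc _ = ∑ i : Fin (c + 1), ((univ.val.map v).esymm (m + 1) *
            ((-1) ^ (i : ℕ) * (v i ^ r * (vandermonde (v ∘ i.succAbove)).det)) -
          (-1) ^ (i : ℕ) * (v i ^ (r + 1) *
            ((univ.val.map (v ∘ i.succAbove)).esymm m *
              (vandermonde (v ∘ i.succAbove)).det))) := by
          refine sum_congr rfl fun i _ => ?_
          rw [esymm_map_univ_succAbove v i m]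
          ring
      _ = 0 := by rw [sum_sub_distrib, ← mul_sum, hpow, hrec, mul_zero, sub_zero]

theorem sum_prod_mul_esymm_mul_det_vandermonde_succAbove (v : Fin (c + 1) → R) :
    ∀ m : ℕ, m ≤ c →
      ∑ i : Fin (c + 1), (-1) ^ (i : ℕ) * ((∏ j, v (i.succAbove j)) *
        ((univ.val.map (v ∘ i.succAbove)).esymm m * (vandermonde (v ∘ i.succAbove)).det)) =
      (univ.val.map v).esymm m * (vandermonde v).det
  | 0, _ => by
    simpa [Multiset.esymm] using (det_vandermonde_eq_sum_succAbove v).symm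
  | m + 1, h => by
    have hzero := sum_pow_mul_esymm_mul_det_vandermonde_succAbove v m 0 (by omega)
    calc _ = ∑ i : Fin (c + 1), ((univ.val.map v).esymm (m + 1) *
            ((-1) ^ (i : ℕ) *
              ((∏ j, v (i.succAbove j)) * (vandermonde (v ∘ i.succAbove)).det)) -
          (∏ j, v j) * ((-1) ^ (i : ℕ) * (v i ^ 0 *
            ((univ.val.map (v ∘ i.succAbove)).esymm m *
              (vandermonde (v ∘ i.succAbove)).det)))) := by
          refine sum_congr rfl fun i _ => ?_
          rw [esymm_map_univ_succAbove v i m, Fin.prod_univ_succAbove v i]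
          ring
      _ = _ := by
          rw [sum_sub_distrib, ← mul_sum, ← mul_sum, hzero,
            ← det_vandermonde_eq_sum_succAbove, mul_zero, sub_zero]

end Vandermonde

section Supported

variable {σ R : Type*} [CommSemiring R]

theorem prod_X_eq_monomial (s : Finset σ) :
    ∏ j ∈ s, (X j : MvPolynomial σ R) = monomial (∑ j ∈ s, Finsupp.single j 1) 1 :=
  (monomial_sum_one s _).symm

theorem prod_X_mem_supported (s : Finset σ) :
    ∏ j ∈ s, (X j : MvPolynomial σ R) ∈ supported R ↑s :=
  Subalgebra.prod_mem _ fun _ hj => Algebra.subset_adjoin (Set.mem_image_of_mem X hj)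

theorem divMonomial_eq_zero_of_mem_supported {s : Set σ} {p : MvPolynomial σ R}
    (hp : p ∈ supported R s) {a : σ →₀ ℕ} {j : σ} (ha : a j ≠ 0) (hj : j ∉ s) :
    p.divMonomial a = 0 := by
  ext m
  rw [coeff_divMonomial, coeff_zero]
  by_contra hm
  refine hj (mem_supported.1 hp ((mem_vars_iff_mem_support j).2
    ⟨a + m, mem_support_iff.2 hm, ?_⟩))
  rw [Finsupp.mem_support_iff, Finsupp.add_apply]
  omega

theorem support_eq_of_coeff_prod_X_mul_ne_zero {s : Finset σ} {q : MvPolynomial σ R}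
    (hq : q ∈ supported R ↑s) {m : σ →₀ ℕ} (hm : coeff m ((∏ j ∈ s, X j) * q) ≠ 0) :
    m.support = s := by
  classical
  refine Subset.antisymm (fun j hj => ?_) fun j hj => ?_
  · exact mem_supported.1 (Subalgebra.mul_mem _ (prod_X_mem_supported s) hq)
      ((mem_vars_iff_mem_support j).2 ⟨m, mem_support_iff.2 hm, hj⟩)
  · rw [prod_X_eq_monomial, coeff_monomial_mul'] at hm
    have hle := (ite_ne_right_iff.1 hm).1 j
    simp only [Finsupp.coe_finsetSum, Finset.sum_apply, Finsupp.single_apply, sum_ite_eq',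
      if_pos hj] at hle
    exact Finsupp.mem_support_iff.2 (by omega)

end Supported

section VandermondeProd

variable {σ R : Type*} [CommRing R] [LinearOrder σ]

theorem sum_card_filter_lt (s : Finset σ) : ∑ j ∈ s, #{k ∈ s | j < k} = (#s).choose 2 := by
  induction s using Finset.induction_on_max with
  | empty => simp
  | insert a t hlt ih =>
    have ha : a ∉ t := fun h => lt_irrefl a (hlt a h)
    have hfilter_a : ({k ∈ insert a t | a < k} : Finset σ) = ∅ :=
      filter_eq_empty_iff.2 fun k hk => by
        rcases mem_insert.1 hk with rfl | hk
        exacts [lt_irrefl k, (hlt k hk).not_gt]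
    have hfilter : ∀ j ∈ t, #{k ∈ insert a t | j < k} = #{k ∈ t | j < k} + 1 := fun j hj => by
      rw [filter_insert, if_pos (hlt j hj), card_insert_of_notMem fun h => ha (mem_filter.1 h).1]
    rw [sum_insert ha, hfilter_a, card_empty, zero_add, sum_congr rfl hfilter, sum_add_distrib,
      ih, card_insert_of_notMem ha, Nat.choose_succ_succ', Nat.choose_one_right, sum_const,
      smul_eq_mul, mul_one, add_comm]

variable (R) in
noncomputable def vandermondeProd (s : Finset σ) : MvPolynomial σ R :=
  ∏ j ∈ s, ∏ k ∈ s with j < k, (X j - X k)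

theorem isHomogeneous_vandermondeProd (s : Finset σ) :
    (vandermondeProd R s).IsHomogeneous ((#s).choose 2) := by
  rw [← sum_card_filter_lt, vandermondeProd]
  refine IsHomogeneous.prod _ _ _ fun j _ => ?_
  simpa using IsHomogeneous.prod _ _ (fun _ => 1) fun k _ =>
    (isHomogeneous_X R j).sub (isHomogeneous_X R k)

theorem vandermondeProd_mem_supported (s : Finset σ) :
    vandermondeProd R s ∈ supported R ↑s := by
  have hX : ∀ j ∈ s, (X j : MvPolynomial σ R) ∈ supported R ↑s := fun _ hj =>
    Algebra.subset_adjoin (Set.mem_image_of_mem X hj)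
  exact Subalgebra.prod_mem _ fun j hj => Subalgebra.prod_mem _ fun k hk =>
    sub_mem (hX j hj) (hX k (mem_filter.1 hk).1)

theorem vandermondeProd_ne_zero [IsDomain R] (s : Finset σ) : vandermondeProd R s ≠ 0 :=
  prod_ne_zero_iff.2 fun _ _ => prod_ne_zero_iff.2 fun _ hk =>
    sub_ne_zero.2 <| (X_injective (σ := σ) (R := R)).ne (mem_filter.1 hk).2.ne

/-- The sign comes from `det_vandermonde` being `∏_{i<j} (v j - v i)`, the opposite orientation
to `vandermondeProd`. -/
theorem vandermondeProd_map_univ {c : ℕ} (g : Fin c ↪o σ) :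
    vandermondeProd R (univ.map g.toEmbedding) =
      (-1) ^ c.choose 2 * (vandermonde fun i => (X (g i) : MvPolynomial σ R)).det := by
  have hfilter : ∀ i, ({k ∈ univ.map g.toEmbedding | g i < k} : Finset σ) =
      (Ioi i).map g.toEmbedding := by
    intro i
    ext k
    simp only [mem_filter, mem_map, mem_univ, true_and, mem_Ioi]
    constructor
    · rintro ⟨⟨j, rfl⟩, h⟩
      exact ⟨j, g.lt_iff_lt.1 h, rfl⟩
    · rintro ⟨j, h, rfl⟩
      exact ⟨⟨j, rfl⟩, g.lt_iff_lt.2 h⟩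
  have hcount : ∑ i : Fin c, #(Ioi i) = c.choose 2 := by
    simpa [filter_lt_eq_Ioi] using sum_card_filter_lt (univ : Finset (Fin c))
  rw [vandermondeProd, det_vandermonde, prod_map, ← hcount, ← prod_pow_eq_pow_sum,
    ← prod_mul_distrib]
  refine prod_congr rfl fun i _ => ?_
  rw [RelEmbedding.coe_toEmbedding, hfilter, prod_map, ← prod_const, ← prod_mul_distrib]
  refine prod_congr rfl fun j _ => ?_
  simp

theorem map_univ_erase {c : ℕ} (g : Fin (c + 1) ↪o σ) (i : Fin (c + 1)) :
    (univ.map g.toEmbedding).erase (g i) =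
      univ.map ((Fin.succAboveOrderEmb i).trans g).toEmbedding := by
  rw [Fin.univ_succAbove c i, map_cons]
  exact (erase_cons _).trans (map_map _ _ _)

theorem card_filter_lt_map_univ {c : ℕ} (g : Fin c ↪o σ) (i : Fin c) :
    #{w ∈ univ.map g.toEmbedding | w < g i} = i := by
  rw [filter_map, card_map, ← Fin.card_Iio i]
  congr 1
  ext j
  simp

theorem esymm_map_univ_map {c : ℕ} (g : Fin c ↪o σ) (m : ℕ) :
    ((univ.map g.toEmbedding).val.map (X : σ → MvPolynomial σ R)).esymm m =
      (univ.val.map fun i => (X (g i) : MvPolynomial σ R)).esymm m := by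
  simp [Function.comp_def]

theorem sum_prod_X_mul_esymm_mul_vandermondeProd_erase {F : Finset σ} {c m : ℕ}
    (hF : #F = c + 1) (hm : m ≤ c) :
    ∑ v ∈ F, (-1) ^ #{w ∈ F | w < v} * ((∏ j ∈ F.erase v, X j) *
      (((F.erase v).val.map X).esymm m * vandermondeProd R (F.erase v))) =
    (-1) ^ c * ((F.val.map X).esymm m * vandermondeProd R F) := by
  obtain ⟨g, rfl⟩ : ∃ g : Fin (c + 1) ↪o σ, univ.map g.toEmbedding = F :=
    ⟨_, map_orderEmbOfFin_univ F hF⟩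
  have key := sum_prod_mul_esymm_mul_det_vandermonde_succAbove
    (fun i => (X (g i) : MvPolynomial σ R)) m hm
  rw [sum_map]
  simp only [RelEmbedding.coe_toEmbedding, card_filter_lt_map_univ, map_univ_erase, prod_map,
    esymm_map_univ_map, vandermondeProd_map_univ]
  simp only [RelEmbedding.trans_apply, Fin.succAboveOrderEmb_apply]
  simp only [Function.comp_def] at key
  have hsq : ((-1 : MvPolynomial σ R) ^ c) * (-1) ^ c = 1 := by
    rw [← pow_add, Even.neg_one_pow ⟨c, rfl⟩]
  simp only [mul_left_comm _ ((-1 : MvPolynomial σ R) ^ c.choose 2)]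
  rw [← mul_sum, key, Nat.choose_succ_succ', Nat.choose_one_right, pow_add]
  linear_combination (-(-1) ^ c.choose 2 *
    (univ.val.map fun i => (X (g i) : MvPolynomial σ R)).esymm m *
    (vandermonde fun i => (X (g i) : MvPolynomial σ R)).det) * hsq

end VandermondeProd

section Contraction

variable {K : Type*} [Field K] {n : ℕ}

theorem contract_eq_sum_of_support_subset {f : MvPolynomial (Fin n) K}
    {S : Finset (Fin n →₀ ℕ)} (hS : f.support ⊆ S) (p : MvPolynomial (Fin n) K) :
    contract f p = ∑ a ∈ S, f.coeff a • p.divMonomial a :=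
  sum_subset hS fun a _ ha => by rw [notMem_support_iff.1 ha, zero_smul]

theorem contract_add_left (f g p : MvPolynomial (Fin n) K) :
    contract (f + g) p = contract f p + contract g p := by
  classical
  rw [contract_eq_sum_of_support_subset support_add,
    contract_eq_sum_of_support_subset subset_union_left,
    contract_eq_sum_of_support_subset subset_union_right, ← sum_add_distrib]
  simp only [coeff_add, add_smul]

theorem contract_sum_left {ι : Type*} (s : Finset ι) (f : ι → MvPolynomial (Fin n) K)
    (p : MvPolynomial (Fin n) K) : contract (∑ i ∈ s, f i) p = ∑ i ∈ s, contract (f i) p :=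
  map_sum (AddMonoidHom.mk' (contract · p) fun f g => contract_add_left f g p) f s

theorem coeff_contract (f p : MvPolynomial (Fin n) K) (m : Fin n →₀ ℕ) :
    coeff m (contract f p) = ∑ a ∈ f.support, f.coeff a * p.coeff (a + m) := by
  simp [contract, coeff_sum, coeff_divMonomial]

theorem contract_sum_smul {ι : Type*} (f : MvPolynomial (Fin n) K) (s : Finset ι) (c : ι → K)
    (p : ι → MvPolynomial (Fin n) K) :
    contract f (∑ i ∈ s, c i • p i) = ∑ i ∈ s, c i • contract f (p i) := by
  ext m
  simp only [coeff_contract, coeff_sum, coeff_smul, smul_eq_mul, mul_sum]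
  rw [sum_comm]
  exact sum_congr rfl fun _ _ => sum_congr rfl fun _ _ => mul_left_comm _ _ _

theorem contract_prod_X (T : Finset (Fin n)) (p : MvPolynomial (Fin n) K) :
    contract (∏ j ∈ T, X j) p = p.divMonomial (∑ j ∈ T, Finsupp.single j 1) := by
  classical
  rw [prod_X_eq_monomial, contract, support_monomial, if_neg one_ne_zero, sum_singleton,
    coeff_monomial, if_pos rfl, one_smul]

theorem contract_prod_X_eq_zero {T s : Finset (Fin n)} (h : ¬T ⊆ s) {p : MvPolynomial (Fin n) K}
    (hp : p ∈ supported K ↑s) : contract (∏ j ∈ T, X j) p = 0 := by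
  obtain ⟨j, hjT, hjs⟩ := not_subset.1 h
  rw [contract_prod_X]
  exact divMonomial_eq_zero_of_mem_supported hp (by simp [Finsupp.single_apply, hjT]) hjs

theorem contract_prod_X_prod_X_mul {T s : Finset (Fin n)} (h : T ⊆ s)
    (q : MvPolynomial (Fin n) K) :
    contract (∏ j ∈ T, X j) ((∏ j ∈ s, X j) * q) = (∏ j ∈ s \ T, X j) * q := by
  rw [contract_prod_X, ← prod_sdiff h, mul_comm (∏ j ∈ s \ T, _), mul_assoc,
    prod_X_eq_monomial T, divMonomial_monomial_mul]

theorem contract_esymm_prod_X_mul {s : Finset (Fin n)} {q : MvPolynomial (Fin n) K}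
    (hq : q ∈ supported K ↑s) {k : ℕ} (hk : k ≤ #s) :
    contract (esymm (Fin n) K k) ((∏ j ∈ s, X j) * q) = (s.val.map X).esymm (#s - k) * q := by
  rw [esymm, contract_sum_left, ← sum_subset (powersetCard_mono (subset_univ s)) fun T hT hTs =>
      contract_prod_X_eq_zero (fun h => hTs (mem_powersetCard.2 ⟨h, (mem_powersetCard.1 hT).2⟩))
        (Subalgebra.mul_mem _ (prod_X_mem_supported s) hq),
    sum_congr rfl fun T hT => contract_prod_X_prod_X_mul (mem_powersetCard.1 hT).1 q,
    esymm_map_val, sum_mul]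
  refine sum_nbij' (s \ ·) (s \ ·) (fun T hT => ?_) (fun S hS => ?_) (fun T hT => ?_)
    (fun S hS => ?_) fun _ _ => rfl
  · obtain ⟨hTs, hTk⟩ := mem_powersetCard.1 hT
    exact mem_powersetCard.2 ⟨sdiff_subset, by rw [card_sdiff_of_subset hTs, hTk]⟩
  · obtain ⟨hSs, hSk⟩ := mem_powersetCard.1 hS
    exact mem_powersetCard.2 ⟨sdiff_subset, by rw [card_sdiff_of_subset hSs, hSk]; omega⟩
  · exact Finset.sdiff_sdiff_eq_self (mem_powersetCard.1 hT).1
  · exact Finset.sdiff_sdiff_eq_self (mem_powersetCard.1 hS).1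

end Contraction

section Boundary

variable {n d : ℕ} {S M : Type*} [Ring S] [AddCommGroup M] [Module S M]

theorem bdryCoeff_erase {F : Finset (Fin n)} {v : Fin n} (hv : v ∈ F) :
    bdryCoeff F (F.erase v) = (-1) ^ #{w ∈ F | w < v} := by
  rw [bdryCoeff, if_pos (erase_subset v F), sdiff_erase_self hv, sum_singleton]

theorem sum_bdryCoeff_smul {F : Finset (Fin n)} (hF : #F = d + 1) (Φ : Finset (Fin n) → M) :
    ∑ τ ∈ univ.powersetCard d, (bdryCoeff F τ : S) • Φ τ =
      ∑ v ∈ F, (-1 : S) ^ #{w ∈ F | w < v} • Φ (F.erase v) := by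
  rw [← sum_subset (powersetCard_mono (subset_univ F)) fun τ hτ hτF => ?_]
  · refine (sum_bij (fun v _ => F.erase v) (fun v hv => ?_) (fun v hv w hw => erase_injOn F hv hw)
      (fun τ hτ => ?_) fun v hv => ?_).symm
    · exact mem_powersetCard.2
        ⟨erase_subset v F, by rw [card_erase_of_mem hv, hF, Nat.add_sub_cancel]⟩
    · obtain ⟨hτF, hτd⟩ := mem_powersetCard.1 hτ
      obtain ⟨v, hv⟩ := card_eq_one.1 (by rw [card_sdiff_of_subset hτF, hF, hτd]; omega :
        #(F \ τ) = 1)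
      refine ⟨v, mem_sdiff.1 (hv ▸ mem_singleton_self v) |>.1, ?_⟩
      rw [← sdiff_singleton_eq_erase, ← hv, Finset.sdiff_sdiff_eq_self hτF]
    · rw [bdryCoeff_erase hv, Int.cast_pow, Int.cast_neg, Int.cast_one]
  · rw [bdryCoeff, if_neg fun h => hτF (mem_powersetCard.2 ⟨h, (mem_powersetCard.1 hτ).2⟩),
      Int.cast_zero, zero_smul]

theorem sum_smul_sum_bdryCoeff_smul_eq_zero {s : ℕ} {F : Fin s → Finset (Fin n)}
    {c : Fin s → S}
    (hcycle : ∀ τ : Finset (Fin n), #τ = d → ∑ i, c i * (bdryCoeff (F i) τ : S) = 0)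
    (Φ : Finset (Fin n) → M) :
    ∑ i, c i • ∑ τ ∈ univ.powersetCard d, (bdryCoeff (F i) τ : S) • Φ τ = 0 := by
  simp only [smul_sum, smul_smul]
  rw [sum_comm]
  refine sum_eq_zero fun τ hτ => ?_
  rw [← sum_smul, hcycle τ (mem_powersetCard.1 hτ).2, zero_smul]

end Boundary

section Facet

variable {K : Type*} [Field K] {n : ℕ}

theorem xFV_eq (F : Finset (Fin n)) :
    (xFV F : MvPolynomial (Fin n) K) = (∏ j ∈ F, X j) * vandermondeProd K F := rfl

theorem xFV_mem_supported (F : Finset (Fin n)) :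
    (xFV F : MvPolynomial (Fin n) K) ∈ supported K ↑F :=
  Subalgebra.mul_mem _ (prod_X_mem_supported F) (vandermondeProd_mem_supported F)

theorem isHomogeneous_xFV (F : Finset (Fin n)) :
    (xFV F : MvPolynomial (Fin n) K).IsHomogeneous (#F + (#F).choose 2) := by
  refine IsHomogeneous.mul ?_ (isHomogeneous_vandermondeProd F)
  simpa using IsHomogeneous.prod F (fun j => (X j : MvPolynomial (Fin n) K)) (fun _ => 1)
    fun j _ => isHomogeneous_X K j

theorem linearIndependent_xFV :
    LinearIndependent K (xFV : Finset (Fin n) → MvPolynomial (Fin n) K) := by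
  refine linearIndependent_iff'.2 fun s g hg F hF => ?_
  have hV := vandermondeProd_mem_supported (σ := Fin n) (R := K)
  obtain ⟨m, hm⟩ := ne_zero_iff.1 (mul_ne_zero (prod_ne_zero_iff.2 fun j _ => X_ne_zero j)
    (vandermondeProd_ne_zero (R := K) F))
  have hcoeff := congrArg (coeff m) hg
  rw [coeff_sum, coeff_zero, sum_eq_single F (fun G _ hGF => ?_) (absurd hF), coeff_smul,
    smul_eq_mul] at hcoeff
  · exact (mul_eq_zero.1 hcoeff).resolve_right hm
  · rw [coeff_smul, xFV_eq, not_ne_iff.1 fun h => hGF ((support_eq_of_coeff_prod_X_mul_ne_zero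
      (hV G) h).symm.trans (support_eq_of_coeff_prod_X_mul_ne_zero (hV F) hm)), smul_zero]

theorem contract_esymm_xFV {F : Finset (Fin n)} {d k : ℕ} (hF : #F = d + 1) (hk : 1 ≤ k)
    (hkd : k ≤ d + 1) :
    contract (esymm (Fin n) K k) (xFV F) = (-1) ^ d * ∑ τ ∈ univ.powersetCard d,
      (bdryCoeff F τ : K) •
        ((∏ j ∈ τ, X j) * ((τ.val.map X).esymm (d + 1 - k) * vandermondeProd K τ)) := by
  rw [xFV_eq, contract_esymm_prod_X_mul (vandermondeProd_mem_supported F) (hF ▸ hkd), hF,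
    sum_bdryCoeff_smul hF]
  simp only [← C_mul', map_pow, map_neg, map_one]
  rw [sum_prod_X_mul_esymm_mul_vandermondeProd_erase hF (by omega), ← mul_assoc, ← pow_add,
    Even.neg_one_pow ⟨d, rfl⟩, one_mul]

end Facet

theorem stmt11_general (K : Type*) [Field K] (n d s : ℕ)
    (Δ : Finset (Finset (Fin n)))
    (hdown : ∀ σ ∈ Δ, ∀ τ ⊆ σ, τ ∈ Δ)
    (F : Fin s → Finset (Fin n)) (hFinj : Function.Injective F)
    (hFΔ : ∀ i, F i ∈ Δ) (hFcard : ∀ i, (F i).card = d + 1)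
    (c : Fin s → K) (hc : c ≠ 0)
    (hcycle : ∀ τ : Finset (Fin n), τ.card = d →
      ∑ i, c i * ((bdryCoeff (F i) τ : ℤ) : K) = 0) :
    (∀ τ : Finset (Fin n), τ ∉ Δ →
        contract (∏ j ∈ τ, (X j : MvPolynomial (Fin n) K)) (∑ i, c i • xFV (F i)) = 0) ∧
      (∀ k : ℕ, 1 ≤ k → k ≤ d + 1 →
        contract (esymm (Fin n) K k) (∑ i, c i • xFV (F i)) = 0) ∧
      (∑ i, c i • xFV (F i) : MvPolynomial (Fin n) K) ∈ homogeneousSubmodule (Fin n) K ((d + 2).choose 2) ∧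
      (∑ i, c i • xFV (F i) : MvPolynomial (Fin n) K) ≠ 0 := by
  refine ⟨fun τ hτ => ?_, fun k hk hkd => ?_, ?_, ?_⟩
  · rw [contract_sum_smul]
    refine sum_eq_zero fun i _ => ?_
    rw [contract_prod_X_eq_zero (fun h => hτ (hdown _ (hFΔ i) τ h)) (xFV_mem_supported _),
      smul_zero]
  · simp only [contract_sum_smul, contract_esymm_xFV (hFcard _) hk hkd,
      ← mul_smul_comm _ ((-1 : MvPolynomial (Fin n) K) ^ d)]
    rw [← mul_sum, sum_smul_sum_bdryCoeff_smul_eq_zero hcycle, mul_zero]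
  · have hdeg : (d + 2).choose 2 = (d + 1) + (d + 1).choose 2 := by
      rw [Nat.choose_succ_succ', Nat.choose_one_right]
    refine Submodule.sum_mem _ fun i _ => Submodule.smul_mem _ _ ?_
    rw [mem_homogeneousSubmodule, hdeg, ← hFcard i]
    exact isHomogeneous_xFV (F i)
  · exact fun h => hc (funext (Fintype.linearIndependent_iff.1
      (linearIndependent_xFV.comp F hFinj) c h))

/-- let `Δ` be a `d`-dimensional simplicial complex with `d`-dimensional
facets `F_1, …, F_s`, and let `c_1 F_1 + ⋯ + c_s F_s` be a nonzero `d`-cycle.  Then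
`F_Δ = ∑ c_i x_{F_i} V(F_i)` is a nonzero homogeneous polynomial of degree `C(d+2,2)`
annihilated under contraction by every monomial generator `x_τ` (`τ ∉ Δ`) of the
Stanley–Reisner ideal and by every elementary symmetric polynomial `e_1, …, e_{d+1}`;
i.e. it is a nonzero degree-`C(d+2,2)` element of the inverse system of
`I_Δ + (e_1, …, e_{d+1})`. -/
theorem stmt11 (K : Type*) [Field K] (n d s : ℕ)
    (Δ : Finset (Finset (Fin n)))
    (hdown : ∀ σ ∈ Δ, ∀ τ ⊆ σ, τ ∈ Δ)
    (hdim : ∀ σ ∈ Δ, σ.card ≤ d + 1)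
    (F : Fin s → Finset (Fin n)) (hFinj : Function.Injective F)
    (hFΔ : ∀ i, F i ∈ Δ) (hFcard : ∀ i, (F i).card = d + 1)
    (hFall : ∀ σ ∈ Δ, σ.card = d + 1 → ∃ i, F i = σ)
    (c : Fin s → K) (hc : c ≠ 0)
    (hcycle : ∀ τ : Finset (Fin n), τ.card = d →
      ∑ i, c i * ((bdryCoeff (F i) τ : ℤ) : K) = 0) :
    (∀ τ : Finset (Fin n), τ ∉ Δ →
        contract (∏ j ∈ τ, (X j : MvPolynomial (Fin n) K)) (∑ i, c i • xFV (F i)) = 0) ∧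
      (∀ k : ℕ, 1 ≤ k → k ≤ d + 1 →
        contract (esymm (Fin n) K k) (∑ i, c i • xFV (F i)) = 0) ∧
      (∑ i, c i • xFV (F i) : MvPolynomial (Fin n) K) ∈ homogeneousSubmodule (Fin n) K ((d + 2).choose 2) ∧
      (∑ i, c i • xFV (F i) : MvPolynomial (Fin n) K) ≠ 0 :=
  stmt11_general K n d s Δ hdown F hFinj hFΔ hFcard c hc hcycle
end

section
/- Let Δ be a d-dimensional simplicial complex on n vertices over a field K, and t = C(d+2,2). Then dim_K of the degree-t part of the inverse system (I_Δ + (e_1,...,e_{d+1}))^{-1} is at least dim_K H̃_d(Δ; K). -/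
open MvPolynomial

/-- Division by a monomial, as a `K`-linear map. -/
noncomputable def divMonL (K : Type*) [Field K] (n : ℕ) (a : Fin n →₀ ℕ) :
    MvPolynomial (Fin n) K →ₗ[K] MvPolynomial (Fin n) K where
  toFun p := p.divMonomial a
  map_add' x y := MvPolynomial.add_divMonomial x y a
  map_smul' c x := by
    ext s
    simp [MvPolynomial.coeff_divMonomial, MvPolynomial.coeff_smul]

/-- Contraction by `f`, as a `K`-linear map: on monomials, `x^a ∘ y^b = y^{b-a}` if
`a ≤ b` componentwise and `0` otherwise, extended bilinearly. -/
noncomputable def contractL {K : Type*} [Field K] {n : ℕ} (f : MvPolynomial (Fin n) K) :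
    MvPolynomial (Fin n) K →ₗ[K] MvPolynomial (Fin n) K :=
  ∑ a ∈ f.support, f.coeff a • divMonL K n a

/-- The degree-`t` part of the inverse system `J⁻¹` of an ideal `J`, with respect to the
contraction action. -/
noncomputable def invSysPiece (K : Type*) [Field K] (n : ℕ)
    (J : Ideal (MvPolynomial (Fin n) K)) (t : ℕ) :
    Submodule K (MvPolynomial (Fin n) K) :=
  homogeneousSubmodule (Fin n) K t ⊓ ⨅ g ∈ J, LinearMap.ker (contractL g)

/-- The top simplicial boundary map of a `d`-dimensional complex `Δ`, from `d`-chains to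
`(d-1)`-chains (indexed by all `d`-element subsets). -/
noncomputable def bdryMap (K : Type*) [Field K] {n : ℕ} (Δ : Finset (Finset (Fin n)))
    (d : ℕ) :
    (({σ // σ ∈ Δ.filter fun σ => σ.card = d + 1}) → K) →ₗ[K] (Finset (Fin n) → K) where
  toFun c := fun τ => if τ.card = d then
      ∑ σ : {σ // σ ∈ Δ.filter fun σ => σ.card = d + 1}, c σ * ((bdryCoeff σ.1 τ : ℤ) : K)
    else 0
  map_add' c c' := by
    funext τ
    by_cases h : τ.card = d <;> simp [h, add_mul, Finset.sum_add_distrib]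
  map_smul' a c := by
    funext τ
    by_cases h : τ.card = d <;> simp [h, Finset.mul_sum, mul_assoc]

/-!
For a `d`-face `σ = {v₀ < ⋯ < v_d}` let `F_σ = det (x_{v_j} ^ (i + 1))`, homogeneous of degree
`1 + ⋯ + (d + 1) = C(d + 2, 2)`. Every monomial of `F_σ` has support exactly `σ`, so square-free
monomials of non-faces contract `F_σ` to zero and distinct `F_σ` are linearly independent.
Contracting by `e_k` sums, over all `k`-sets of columns, the determinants with the exponents in
those columns lowered by one; term by term in the Leibniz expansion this is the sum, over row sets
`U` with `#U = d + 1 - k`, of the determinants with row exponents `i + [i ∈ U]`. All of them vanish except the one with `U = {i | k ≤ i}`, whose row `0` is all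
ones, and Laplace expansion along that row gives `e_k ∘ F_σ = ∑_τ [σ : τ] H_k(τ)` with `H_k(τ)`
depending only on the `(d - 1)`-face `τ`. Hence `c ↦ ∑_σ c_σ F_σ` embeds the top cycles into the
degree-`C(d + 2, 2)` part of the inverse system.
-/

open Finset

section

variable {K : Type*} [Field K] {n : ℕ}

section Contraction

lemma contractL_eq_sum_of_support_subset {g : MvPolynomial (Fin n) K}
    {T : Finset (Fin n →₀ ℕ)} (hT : g.support ⊆ T) :
    contractL g = ∑ a ∈ T, coeff a g • divMonL K n a :=
  sum_subset hT fun _ _ ha => by rw [notMem_support_iff.mp ha, zero_smul]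

lemma contractL_add (g h : MvPolynomial (Fin n) K) :
    contractL (g + h) = contractL g + contractL h := by
  classical
  rw [contractL_eq_sum_of_support_subset support_add,
    contractL_eq_sum_of_support_subset (subset_union_left (s₂ := h.support)),
    contractL_eq_sum_of_support_subset (subset_union_right (s₁ := g.support))]
  simp only [coeff_add, add_smul, sum_add_distrib]

lemma contractL_zero : contractL (0 : MvPolynomial (Fin n) K) = 0 := by
  simp [contractL]

lemma contractL_monomial (a : Fin n →₀ ℕ) (c : K) :
    contractL (monomial a c) = c • divMonL K n a := by
  classical
  rw [contractL_eq_sum_of_support_subset support_monomial_subset, sum_singleton,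
    coeff_monomial, if_pos rfl]

lemma contractL_sum {ι : Type*} (s : Finset ι) (f : ι → MvPolynomial (Fin n) K) :
    contractL (∑ i ∈ s, f i) = ∑ i ∈ s, contractL (f i) :=
  map_sum (AddMonoidHom.mk' contractL contractL_add) f s

lemma divMonL_add (a b : Fin n →₀ ℕ) :
    divMonL K n (a + b) = divMonL K n a ∘ₗ divMonL K n b := by
  refine LinearMap.ext fun p => MvPolynomial.ext _ _ fun s => ?_
  simp only [divMonL, LinearMap.coe_comp, LinearMap.coe_mk, AddHom.coe_mk, Function.comp_apply,
    coeff_divMonomial, add_right_comm, add_comm b]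

lemma contractL_mul (p q : MvPolynomial (Fin n) K) :
    contractL (p * q) = contractL p ∘ₗ contractL q := by
  induction p using MvPolynomial.induction_on' with
  | monomial u a =>
    induction q using MvPolynomial.induction_on' with
    | monomial v b =>
      rw [monomial_mul, contractL_monomial, contractL_monomial, contractL_monomial, divMonL_add,
        LinearMap.smul_comp, LinearMap.comp_smul, smul_smul, mul_comm]
    | add q₁ q₂ ih₁ ih₂ =>
      rw [mul_add, contractL_add, contractL_add, ih₁, ih₂, LinearMap.comp_add]
  | add p₁ p₂ ih₁ ih₂ =>
    rw [add_mul, contractL_add, contractL_add, ih₁, ih₂, LinearMap.add_comp]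

variable (K) in
noncomputable def contractAnnihilator (q : MvPolynomial (Fin n) K) :
    Ideal (MvPolynomial (Fin n) K) where
  carrier := {g | contractL g q = 0}
  add_mem' {g h} hg hh := by
    simp only [Set.mem_ofPred_eq, contractL_add, LinearMap.add_apply] at *
    rw [hg, hh, add_zero]
  zero_mem' := by simp [contractL_zero]
  smul_mem' p g hg := by
    simp only [Set.mem_ofPred_eq, smul_eq_mul, contractL_mul, LinearMap.comp_apply] at *
    rw [hg, map_zero]

lemma mem_invSysPiece_iff {J : Ideal (MvPolynomial (Fin n) K)} {t : ℕ}
    {q : MvPolynomial (Fin n) K} :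
    q ∈ invSysPiece K n J t ↔
      q ∈ homogeneousSubmodule (Fin n) K t ∧ J ≤ contractAnnihilator K q := by
  simp only [invSysPiece, Submodule.mem_inf, Submodule.mem_iInf, LinearMap.mem_ker]
  rfl

lemma divMonomial_monomial_eq_ite (a b : Fin n →₀ ℕ) (r : K) :
    (monomial b r).divMonomial a = if a ≤ b then monomial (b - a) r else 0 := by
  by_cases hab : a ≤ b
  · rw [if_pos hab]
    ext s
    rw [coeff_divMonomial, coeff_monomial, coeff_monomial]
    exact if_congr ⟨fun h => by rw [h, add_tsub_cancel_left], fun h => by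
      rw [← h, add_tsub_cancel_of_le hab]⟩ rfl rfl
  · rw [if_neg hab]
    ext s
    rw [coeff_divMonomial, coeff_monomial, coeff_zero,
      if_neg (by rintro rfl; exact hab le_self_add)]

noncomputable def sqfreeExp (S : Finset (Fin n)) : Fin n →₀ ℕ :=
  ∑ v ∈ S, Finsupp.single v 1

lemma prod_X_eq_monomial_sqfreeExp (S : Finset (Fin n)) :
    ∏ v ∈ S, (X v : MvPolynomial (Fin n) K) = monomial (sqfreeExp S) 1 := by
  simp [sqfreeExp, monomial_sum_one, X]

lemma contractL_esymm (k : ℕ) (p : MvPolynomial (Fin n) K) :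
    contractL (esymm (Fin n) K k) p =
      ∑ S ∈ powersetCard k univ, p.divMonomial (sqfreeExp S) := by
  simp [esymm, contractL_sum, LinearMap.sum_apply, prod_X_eq_monomial_sqfreeExp,
    contractL_monomial, divMonL]

end Contraction

section ExponentVectors

variable {ι : Type*} [Fintype ι] {f : ι → Fin n}

noncomputable def pushExp (f : ι → Fin n) (a : ι → ℕ) : Fin n →₀ ℕ :=
  ∑ i, Finsupp.single (f i) (a i)

lemma prod_X_pow_eq_monomial_pushExp (f : ι → Fin n) (a : ι → ℕ) :
    ∏ i, (X (f i) : MvPolynomial (Fin n) K) ^ a i = monomial (pushExp f a) 1 := by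
  simp [pushExp, monomial_sum_one, X_pow_eq_monomial]

lemma pushExp_apply_self (hf : Function.Injective f) (a : ι → ℕ) (i : ι) :
    pushExp f a (f i) = a i := by
  classical
  simp [pushExp, Finsupp.finsetSum_apply, Finsupp.single_apply, hf.eq_iff]

lemma pushExp_apply_of_notMem_range (a : ι → ℕ) {v : Fin n} (hv : v ∉ Set.range f) :
    pushExp f a v = 0 := by
  simp only [pushExp, Finsupp.finsetSum_apply]
  exact sum_eq_zero fun i _ => Finsupp.single_eq_of_ne fun h => hv ⟨i, h.symm⟩

lemma pushExp_injective (hf : Function.Injective f) :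
    Function.Injective (pushExp f) := fun a b h =>
  funext fun i => by rw [← pushExp_apply_self hf a i, h, pushExp_apply_self hf]

lemma pushExp_ne_zero_iff (hf : Function.Injective f) {a : ι → ℕ} (ha : ∀ i, a i ≠ 0)
    {v : Fin n} : pushExp f a v ≠ 0 ↔ v ∈ Set.range f := by
  refine ⟨fun hv => by_contra fun h => hv (pushExp_apply_of_notMem_range a h), ?_⟩
  rintro ⟨i, rfl⟩
  rw [pushExp_apply_self hf]
  exact ha i

lemma pushExp_mono {a b : ι → ℕ} (hab : a ≤ b) : pushExp f a ≤ pushExp f b :=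
  sum_le_sum fun i _ => Finsupp.single_le_single.mpr (hab i)

lemma pushExp_tsub (hf : Function.Injective f) (a b : ι → ℕ) :
    pushExp f b - pushExp f a = pushExp f (b - a) := by
  ext v
  by_cases hv : v ∈ Set.range f
  · obtain ⟨i, rfl⟩ := hv
    simp [pushExp_apply_self hf]
  · simp [pushExp_apply_of_notMem_range _ hv]

lemma degree_pushExp (f : ι → Fin n) (a : ι → ℕ) : (pushExp f a).degree = ∑ i, a i := by
  simp [pushExp]

lemma sqfreeExp_apply (S : Finset (Fin n)) (v : Fin n) :
    sqfreeExp S v = if v ∈ S then 1 else 0 := by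
  simp [sqfreeExp, Finsupp.finsetSum_apply, Finsupp.single_apply]

lemma sqfreeExp_image [DecidableEq ι] (hf : Function.Injective f) (T : Finset ι) :
    sqfreeExp (T.image f) = pushExp f fun i => if i ∈ T then 1 else 0 := by
  simp only [sqfreeExp, pushExp, sum_image hf.injOn, apply_ite (Finsupp.single _),
    Finsupp.single_zero, sum_ite_mem, univ_inter]

end ExponentVectors

section Alternant

variable {m : ℕ}

variable (K) in
noncomputable def alternant (f : Fin m → Fin n) (a : Fin m → ℕ) : MvPolynomial (Fin n) K :=
  (Matrix.of fun i j => X (f j) ^ a i).det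

lemma alternant_eq_sum (f : Fin m → Fin n) (a : Fin m → ℕ) :
    alternant K f a =
      ∑ π : Equiv.Perm (Fin m),
        monomial (pushExp f fun i => a (π i)) ((Equiv.Perm.sign π : ℤ) : K) := by
  rw [alternant, Matrix.det_apply']
  refine sum_congr rfl fun π _ => ?_
  simp only [Matrix.of_apply]
  rw [prod_X_pow_eq_monomial_pushExp f fun i => a (π i),
    ← map_intCast (C : K →+* MvPolynomial (Fin n) K), C_mul_monomial, mul_one]

lemma isHomogeneous_alternant (f : Fin m → Fin n) (a : Fin m → ℕ) :
    (alternant K f a).IsHomogeneous (∑ i, a i) := by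
  rw [alternant_eq_sum]
  refine IsHomogeneous.sum _ _ _ fun π _ => isHomogeneous_monomial _ ?_
  rw [degree_pushExp]
  exact Equiv.sum_comp π a

lemma alternant_eq_zero_of_apply_eq (f : Fin m → Fin n) {a : Fin m → ℕ} {i j : Fin m}
    (hij : i ≠ j) (h : a i = a j) : alternant K f a = 0 :=
  Matrix.det_zero_of_row_eq hij (funext fun _ => by simp [h])

lemma alternant_eq_sum_succAbove (f : Fin (m + 1) → Fin n) {a : Fin (m + 1) → ℕ}
    (h₀ : a 0 = 0) :
    alternant K f a =
      ∑ j : Fin (m + 1), (-1 : K) ^ (j : ℕ) • alternant K (f ∘ j.succAbove) (a ∘ Fin.succ) := by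
  rw [alternant, Matrix.det_succ_row_zero]
  refine sum_congr rfl fun j _ => ?_
  simp only [Matrix.of_apply, h₀, pow_zero, mul_one, smul_eq_C_mul, map_pow, map_neg, map_one]
  rfl

lemma divMonomial_sum {ι : Type*} (s : Finset ι) (p : ι → MvPolynomial (Fin n) K)
    (a : Fin n →₀ ℕ) : (∑ i ∈ s, p i).divMonomial a = ∑ i ∈ s, (p i).divMonomial a :=
  map_sum (divMonL K n a) p s

lemma divMonomial_alternant_eq_zero (f : Fin m → Fin n) (a : Fin m → ℕ) {S : Finset (Fin n)}
    (hS : ¬ (S : Set (Fin n)) ⊆ Set.range f) :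
    (alternant K f a).divMonomial (sqfreeExp S) = 0 := by
  obtain ⟨v, hvS, hvf⟩ := Set.not_subset.mp hS
  have hle : ∀ b, ¬ sqfreeExp S ≤ pushExp f b := fun b hle => by
    simpa [sqfreeExp_apply, mem_coe.mp hvS, pushExp_apply_of_notMem_range b hvf] using hle v
  rw [alternant_eq_sum, divMonomial_sum]
  exact sum_eq_zero fun π _ => by rw [divMonomial_monomial_eq_ite, if_neg (hle _)]

end Alternant

lemma sum_powersetCard_image {ι α β : Type*} [DecidableEq α] [AddCommMonoid β] {f : ι → α}
    (hf : Function.Injective f) (s : Finset ι) (k : ℕ) (g : Finset α → β) :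
    ∑ S ∈ powersetCard k (s.image f), g S = ∑ T ∈ powersetCard k s, g (T.image f) := by
  have hmap : ∀ T : Finset ι, T.image f = T.map ⟨f, hf⟩ := fun T =>
    (map_eq_image ⟨f, hf⟩ T).symm
  rw [hmap, powersetCard_map, sum_map]
  simp only [hmap]
  rfl

section EsymmContraction

variable {m : ℕ}

/-- Lowering the exponents of the columns in `T` of a term of the Leibniz expansion is the
same as raising the exponents of the rows outside `π '' T`; summing over `T` with `#T = k`
trades the columns for the row sets `U` with `#U = m - k`. -/
lemma sum_divMonomial_alternant {f : Fin m → Fin n} (hf : Function.Injective f)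
    (b : Fin m → ℕ) {k : ℕ} (hk : k ≤ m) :
    ∑ T ∈ powersetCard k univ,
        (alternant K f fun i => b i + 1).divMonomial (sqfreeExp (T.image f))
      = ∑ U ∈ powersetCard (m - k) univ,
          alternant K f fun i => b i + if i ∈ U then 1 else 0 := by
  have hterm : ∀ (T : Finset (Fin m)) (π : Equiv.Perm (Fin m)),
      (monomial (pushExp f fun i => b (π i) + 1) ((Equiv.Perm.sign π : ℤ) : K)).divMonomial
          (pushExp f fun i => if i ∈ T then 1 else 0) =
        monomial (pushExp f fun i => b (π i) + if π i ∈ (T.map π.toEmbedding)ᶜ then 1 else 0)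
          ((Equiv.Perm.sign π : ℤ) : K) := by
    intro T π
    rw [divMonomial_monomial_eq_ite,
      if_pos (pushExp_mono fun i => by dsimp only; split_ifs <;> omega), pushExp_tsub hf]
    congr 2
    exact congrArg (pushExp f) (funext fun i => by by_cases hi : i ∈ T <;> simp [hi])
  simp only [alternant_eq_sum, sqfreeExp_image hf, divMonomial_sum, hterm]
  rw [sum_comm, sum_comm (s := powersetCard (m - k) univ)]
  refine sum_congr rfl fun π _ => ?_
  refine sum_nbij' (fun T => (T.map π.toEmbedding)ᶜ) (fun U => (U.map π.symm.toEmbedding)ᶜ)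
    ?_ ?_ ?_ ?_ fun _ _ => rfl
  · intro T hT
    simp_all [mem_powersetCard, card_compl]
  · intro U hU
    have := card_le_univ U
    simp_all [mem_powersetCard, card_compl]
    omega
  · intro T _
    ext i
    simp
  · intro U _
    ext i
    simp

lemma eq_filter_le_of_monotone_mem {U : Finset (Fin m)} (hU : Monotone (· ∈ U)) {k : ℕ}
    (hk : k ≤ m) (hcard : #U = m - k) : U = ({i | k ≤ (i : ℕ)} : Finset (Fin m)) := by
  have hcompl : #{i | i ∉ U} = k := by
    rw [filter_not, filter_mem_eq_inter, univ_inter, card_sdiff_of_subset (subset_univ U),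
      card_univ, Fintype.card_fin, hcard]
    omega
  ext i
  have := Fin.lt_card_filter_univ_iff_apply_of_imp (j := i) (· ∉ U)
    fun i j hji hi hj => hi (hU hji hj)
  rw [hcompl] at this
  simp only [mem_filter, mem_univ, true_and, ← not_lt, this, not_not]

/-- Of the determinants with row exponents `i + [i ∈ U]`, only the one with `U` an upper
interval survives: otherwise two consecutive rows coincide. -/
lemma sum_alternant_add_indicator (f : Fin (m + 1) → Fin n) {k : ℕ} (hk : k ≤ m + 1) :
    ∑ U ∈ powersetCard (m + 1 - k) univ, alternant K f (fun i => i + if i ∈ U then 1 else 0)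
      = alternant K f fun i => i + if k ≤ (i : ℕ) then 1 else 0 := by
  have hfilter :
      ({i | k ≤ (i : ℕ)} : Finset (Fin (m + 1))) ∈ powersetCard (m + 1 - k) univ := by
    refine mem_powersetCard.mpr ⟨subset_univ _, ?_⟩
    have := card_filter_add_card_filter_not (s := (univ : Finset (Fin (m + 1))))
      (p := fun i => (i : ℕ) < k)
    simp only [Fin.card_filter_val_lt, not_lt, card_univ, Fintype.card_fin] at this
    omega
  rw [sum_eq_single_of_mem _ hfilter]
  · simp only [mem_filter, mem_univ, true_and]
  · intro U hU hne
    have hmono : ¬ Monotone (· ∈ U) := fun hmono =>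
      hne (eq_filter_le_of_monotone_mem hmono hk (mem_powersetCard.mp hU).2)
    rw [Fin.monotone_iff_le_succ] at hmono
    obtain ⟨i, hi⟩ := not_forall.mp hmono
    obtain ⟨hi, hi'⟩ := Classical.not_imp.mp hi
    refine alternant_eq_zero_of_apply_eq f (Fin.castSucc_lt_succ (i := i)).ne ?_
    simp [hi, hi']

theorem contractL_esymm_alternant {f : Fin (m + 1) → Fin n} (hf : Function.Injective f) {k : ℕ}
    (hk₁ : 1 ≤ k) (hk : k ≤ m + 1) :
    contractL (esymm (Fin n) K k) (alternant K f fun i => i + 1) =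
      ∑ j : Fin (m + 1), (-1 : K) ^ (j : ℕ) •
        alternant K (f ∘ j.succAbove) fun r => r + 1 + if k ≤ (r : ℕ) + 1 then 1 else 0 := by
  have hrange : ∀ S ∈ powersetCard k univ, S ∉ powersetCard k (univ.image f) →
      (alternant K f fun i => i + 1).divMonomial (sqfreeExp S) = 0 := by
    intro S hS hS'
    refine divMonomial_alternant_eq_zero f _ fun hsub => hS' (mem_powersetCard.mpr ⟨?_, ?_⟩)
    · intro v hv
      obtain ⟨i, rfl⟩ := hsub hv
      exact mem_image_of_mem f (mem_univ i)
    · exact (mem_powersetCard.mp hS).2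
  rw [contractL_esymm, ← sum_subset (powersetCard_mono (subset_univ _)) hrange,
    sum_powersetCard_image hf univ, sum_divMonomial_alternant hf _ hk,
    sum_alternant_add_indicator f hk, alternant_eq_sum_succAbove f ?_]
  · simp only [Function.comp_def, Fin.val_succ]
  · rw [Fin.val_zero, if_neg (by omega)]

end EsymmContraction

section Boundary

lemma image_comp_succAbove {d : ℕ} {f : Fin (d + 1) → Fin n} (hf : Function.Injective f)
    (j : Fin (d + 1)) : univ.image (f ∘ j.succAbove) = (univ.image f).erase (f j) := by
  ext v
  simp only [mem_image, mem_univ, true_and, Function.comp_apply, mem_erase]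
  constructor
  · rintro ⟨i, rfl⟩
    exact ⟨hf.ne (Fin.succAbove_ne j i), _, rfl⟩
  · rintro ⟨hv, i, rfl⟩
    obtain ⟨z, rfl⟩ := Fin.exists_succAbove_eq_iff.mpr (hf.ne_iff.mp hv)
    exact ⟨z, rfl⟩

lemma bdryCoeff_erase_s13 {d : ℕ} {f : Fin (d + 1) → Fin n} (hf : StrictMono f) (j : Fin (d + 1)) :
    bdryCoeff (univ.image f) ((univ.image f).erase (f j)) = (-1) ^ (j : ℕ) := by
  have hj : f j ∈ univ.image f := mem_image_of_mem f (mem_univ j)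
  rw [bdryCoeff, if_pos (erase_subset _ _), sdiff_erase_self hj, sum_singleton, filter_image,
    card_image_of_injective _ hf.injective]
  simp only [hf.lt_iff_lt, filter_gt_eq_Iio, Fin.card_Iio]

lemma bdryCoeff_eq_zero {d : ℕ} {f : Fin (d + 1) → Fin n} (hf : Function.Injective f)
    {τ : Finset (Fin n)} (hτ : #τ = d) (hne : ∀ j, τ ≠ (univ.image f).erase (f j)) :
    bdryCoeff (univ.image f) τ = 0 := by
  refine if_neg fun hsub => ?_
  have hcard : #(univ.image f \ τ) = 1 := by
    rw [card_sdiff_of_subset hsub, card_image_of_injective _ hf, card_univ, Fintype.card_fin, hτ]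
    omega
  obtain ⟨v, hv⟩ := card_eq_one.mp hcard
  obtain ⟨j, -, rfl⟩ := mem_image.mp (mem_sdiff.mp (hv ▸ mem_singleton_self v)).1
  refine hne j ?_
  rw [← sdiff_singleton_eq_erase, ← hv, Finset.sdiff_sdiff_eq_self hsub]

lemma sum_bdryCoeff_smul_s13 {R M : Type*} [Ring R] [AddCommGroup M] [Module R M] {d : ℕ}
    {f : Fin (d + 1) → Fin n} (hf : StrictMono f) (G : Finset (Fin n) → M) :
    ∑ τ ∈ powersetCard d univ, ((bdryCoeff (univ.image f) τ : ℤ) : R) • G τ =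
      ∑ j : Fin (d + 1), (-1 : R) ^ (j : ℕ) • G (univ.image (f ∘ j.succAbove)) := by
  have hfaces : univ.image (fun j => (univ.image f).erase (f j)) ⊆ powersetCard d univ := by
    intro τ hτ
    obtain ⟨j, -, rfl⟩ := mem_image.mp hτ
    rw [mem_powersetCard, card_erase_of_mem (mem_image_of_mem f (mem_univ j)),
      card_image_of_injective _ hf.injective, card_univ, Fintype.card_fin]
    exact ⟨subset_univ _, rfl⟩
  have hinj : Function.Injective fun j => (univ.image f).erase (f j) := fun i j hij =>
    hf.injective ((erase_inj _ (mem_image_of_mem f (mem_univ i))).mp hij)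
  rw [← sum_subset hfaces, sum_image hinj.injOn]
  · simp only [bdryCoeff_erase_s13 hf, image_comp_succAbove hf.injective, Int.cast_pow,
      Int.cast_neg, Int.cast_one]
  · intro τ hτ hτ'
    rw [bdryCoeff_eq_zero hf.injective (mem_powersetCard.mp hτ).2
      fun j h => hτ' (h ▸ mem_image_of_mem _ (mem_univ j)), Int.cast_zero, zero_smul]

end Boundary

section SimplexPolynomials

variable (K) in
noncomputable def simplexPoly (a : ℕ → ℕ) (τ : Finset (Fin n)) : MvPolynomial (Fin n) K :=
  alternant K (τ.orderEmbOfFin rfl) fun i => a i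

lemma simplexPoly_eq_alternant (a : ℕ → ℕ) {τ : Finset (Fin n)} {m : ℕ} (h : #τ = m) :
    simplexPoly K a τ = alternant K (τ.orderEmbOfFin h) fun i => a i := by
  subst h
  rfl

lemma simplexPoly_image (a : ℕ → ℕ) {m : ℕ} {f : Fin m → Fin n} (hf : StrictMono f) :
    simplexPoly K a (univ.image f) = alternant K f fun i => a i := by
  have h : #(univ.image f) = m := by
    rw [card_image_of_injective _ hf.injective, card_univ, Fintype.card_fin]
  rw [simplexPoly_eq_alternant a h,
    ← orderEmbOfFin_unique h (fun i => mem_image_of_mem f (mem_univ i)) hf]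

lemma divMonomial_simplexPoly_eq_zero (a : ℕ → ℕ) {σ S : Finset (Fin n)} (hS : ¬ S ⊆ σ) :
    (simplexPoly K a σ).divMonomial (sqfreeExp S) = 0 :=
  divMonomial_alternant_eq_zero _ _ (by rwa [range_orderEmbOfFin, coe_subset])

lemma sum_range_add_one_eq_choose_two (m : ℕ) :
    ∑ i ∈ range m, (i + 1) = (m + 1).choose 2 := by
  induction m with
  | zero => rfl
  | succ m ih =>
    rw [sum_range_succ, ih, Nat.choose_succ_succ' (m + 1), Nat.choose_one_right, add_comm]

lemma isHomogeneous_simplexPoly_add_one {d : ℕ} {σ : Finset (Fin n)} (hσ : #σ = d + 1) :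
    (simplexPoly K (· + 1) σ).IsHomogeneous ((d + 2).choose 2) := by
  rw [simplexPoly_eq_alternant _ hσ, ← sum_range_add_one_eq_choose_two,
    ← Fin.sum_univ_eq_sum_range (· + 1)]
  exact isHomogeneous_alternant _ _

lemma coeff_simplexPoly_add_one (σ τ : Finset (Fin n)) :
    coeff (pushExp (τ.orderEmbOfFin rfl) fun i => (i : ℕ) + 1) (simplexPoly K (· + 1) σ) =
      if σ = τ then 1 else 0 := by
  rw [simplexPoly, alternant_eq_sum, coeff_sum]
  simp only [coeff_monomial]
  split_ifs with hστ
  · subst hστ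
    rw [sum_eq_single 1 (fun π _ hπ => if_neg fun h => hπ ?_) (by simp)]
    · simp
    ext i
    simpa using congrFun (pushExp_injective (σ.orderEmbOfFin rfl).injective h) i
  · refine sum_eq_zero fun π _ => if_neg fun h => hστ ?_
    ext v
    rw [← mem_coe, ← mem_coe, ← range_orderEmbOfFin σ rfl, ← range_orderEmbOfFin τ rfl,
      ← pushExp_ne_zero_iff (orderEmbOfFin σ rfl).injective (a := fun i => (π i : ℕ) + 1)
        (fun _ => Nat.succ_ne_zero _), h,
      pushExp_ne_zero_iff (orderEmbOfFin τ rfl).injective (fun _ => Nat.succ_ne_zero _)]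

theorem linearIndependent_simplexPoly_add_one :
    LinearIndependent K fun σ : Finset (Fin n) => simplexPoly K (· + 1) σ := by
  refine Fintype.linearIndependent_iff.mpr fun g hg τ => ?_
  simpa [coeff_sum, coeff_simplexPoly_add_one] using
    congrArg (coeff (pushExp (τ.orderEmbOfFin rfl) fun i => (i : ℕ) + 1)) hg

theorem contractL_esymm_simplexPoly {d : ℕ} {σ : Finset (Fin n)} (hσ : #σ = d + 1) {k : ℕ}
    (hk₁ : 1 ≤ k) (hk : k ≤ d + 1) :
    contractL (esymm (Fin n) K k) (simplexPoly K (· + 1) σ) =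
      ∑ τ ∈ powersetCard d univ, ((bdryCoeff σ τ : ℤ) : K) •
        simplexPoly K (fun r => r + 1 + if k ≤ r + 1 then 1 else 0) τ := by
  have hf : StrictMono (σ.orderEmbOfFin hσ) := (σ.orderEmbOfFin hσ).strictMono
  rw [simplexPoly_eq_alternant _ hσ, contractL_esymm_alternant hf.injective hk₁ hk]
  conv_rhs => rw [← image_orderEmbOfFin_univ σ hσ, sum_bdryCoeff_smul_s13 hf]
  simp only [simplexPoly_image _ (hf.comp (Fin.strictMono_succAbove _))]

end SimplexPolynomials

section Facets

variable (Δ : Finset (Finset (Fin n))) (d : ℕ)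

variable (K) in
noncomputable def facetMap :
    ({σ // σ ∈ Δ.filter fun σ => σ.card = d + 1} → K) →ₗ[K] MvPolynomial (Fin n) K :=
  Fintype.linearCombination K fun σ => simplexPoly K (· + 1) σ.1

lemma facetMap_injective : Function.Injective (facetMap K Δ d) :=
  (linearIndependent_simplexPoly_add_one.comp _ Subtype.val_injective)
    |>.fintypeLinearCombination_injective

variable {Δ d}

lemma facetMap_mem_homogeneousSubmodule
    (c : {σ // σ ∈ Δ.filter fun σ => σ.card = d + 1} → K) :
    facetMap K Δ d c ∈ homogeneousSubmodule (Fin n) K ((d + 2).choose 2) :=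
  Submodule.sum_mem _ fun σ _ => Submodule.smul_mem _ _
    (isHomogeneous_simplexPoly_add_one (mem_filter.mp σ.2).2)

lemma SRIdeal_le_contractAnnihilator_facetMap (hdown : ∀ σ ∈ Δ, ∀ τ ⊆ σ, τ ∈ Δ)
    (c : {σ // σ ∈ Δ.filter fun σ => σ.card = d + 1} → K) :
    SRIdeal K n Δ ≤ contractAnnihilator K (facetMap K Δ d c) := by
  rw [SRIdeal, Ideal.span_le]
  rintro _ ⟨τ, hτ, rfl⟩
  change contractL _ (facetMap K Δ d c) = 0
  rw [prod_X_eq_monomial_sqfreeExp, contractL_monomial, one_smul, facetMap,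
    Fintype.linearCombination_apply, map_sum]
  refine sum_eq_zero fun σ _ => ?_
  rw [map_smul, divMonL, LinearMap.coe_mk, AddHom.coe_mk,
    divMonomial_simplexPoly_eq_zero _ fun hsub => hτ (hdown _ (mem_filter.mp σ.2).1 τ hsub),
    smul_zero]

lemma span_esymm_le_contractAnnihilator_facetMap
    {c : {σ // σ ∈ Δ.filter fun σ => σ.card = d + 1} → K} (hc : bdryMap K Δ d c = 0) :
    Ideal.span {p | ∃ i : ℕ, 1 ≤ i ∧ i ≤ d + 1 ∧ p = esymm (Fin n) K i} ≤
      contractAnnihilator K (facetMap K Δ d c) := by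
  rw [Ideal.span_le]
  rintro _ ⟨k, hk₁, hk, rfl⟩
  change contractL _ (facetMap K Δ d c) = 0
  have hcard : ∀ σ : {σ // σ ∈ Δ.filter fun σ => σ.card = d + 1}, #σ.1 = d + 1 :=
    fun σ => (mem_filter.mp σ.2).2
  simp only [facetMap, Fintype.linearCombination_apply, map_sum, map_smul,
    contractL_esymm_simplexPoly (hcard _) hk₁ hk, smul_sum, smul_smul]
  rw [sum_comm]
  refine sum_eq_zero fun τ hτ => ?_
  have h := congrFun hc τ
  simp only [bdryMap, LinearMap.coe_mk, AddHom.coe_mk, if_pos (mem_powersetCard.mp hτ).2,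
    Pi.zero_apply] at h
  rw [← sum_smul, h, zero_smul]

lemma facetMap_mem_invSysPiece (hdown : ∀ σ ∈ Δ, ∀ τ ⊆ σ, τ ∈ Δ)
    {c : {σ // σ ∈ Δ.filter fun σ => σ.card = d + 1} → K} (hc : bdryMap K Δ d c = 0) :
    facetMap K Δ d c ∈ invSysPiece K n
      (SRIdeal K n Δ ⊔
        Ideal.span {p | ∃ i : ℕ, 1 ≤ i ∧ i ≤ d + 1 ∧ p = esymm (Fin n) K i})
      ((d + 2).choose 2) :=
  mem_invSysPiece_iff.mpr ⟨facetMap_mem_homogeneousSubmodule c,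
    sup_le (SRIdeal_le_contractAnnihilator_facetMap hdown c)
      (span_esymm_le_contractAnnihilator_facetMap hc)⟩

end Facets

instance (J : Ideal (MvPolynomial (Fin n) K)) (t : ℕ) :
    FiniteDimensional K (invSysPiece K n J t) :=
  Submodule.finiteDimensional_of_le fun _ hp =>
    (mem_restrictTotalDegree _ _ _).mpr ((mem_invSysPiece_iff.mp hp).1.totalDegree_le)

end

theorem stmt13_general (K : Type*) [Field K] (n d : ℕ)
    (Δ : Finset (Finset (Fin n)))
    (hdown : ∀ σ ∈ Δ, ∀ τ ⊆ σ, τ ∈ Δ) :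
    Module.finrank K (LinearMap.ker (bdryMap K Δ d))
      ≤ Module.finrank K (invSysPiece K n
          (SRIdeal K n Δ ⊔
            Ideal.span {p | ∃ i : ℕ, 1 ≤ i ∧ i ≤ d + 1 ∧ p = esymm (Fin n) K i})
          ((d + 2).choose 2)) := by
  let φ := ((facetMap K Δ d).domRestrict (LinearMap.ker (bdryMap K Δ d))).codRestrict _
    fun c => facetMap_mem_invSysPiece hdown c.2
  exact LinearMap.finrank_le_finrank_of_injective (f := φ) fun a b h =>
    Subtype.ext (facetMap_injective Δ d (congrArg Subtype.val h))

/-- for a `d`-dimensional simplicial complex `Δ` on `n` vertices and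
`t = C(d+2,2)`, the dimension of the degree-`t` part of the inverse system of
`I_Δ + (e_1, …, e_{d+1})` is at least `dim_K H̃_d(Δ; K)` (the top reduced homology,
which is the kernel of the top boundary map). -/
theorem stmt13 (K : Type*) [Field K] (n d : ℕ)
    (Δ : Finset (Finset (Fin n)))
    (hdown : ∀ σ ∈ Δ, ∀ τ ⊆ σ, τ ∈ Δ)
    (hdim : ∀ σ ∈ Δ, σ.card ≤ d + 1) :
    Module.finrank K (LinearMap.ker (bdryMap K Δ d))
      ≤ Module.finrank K (invSysPiece K n
          (SRIdeal K n Δ ⊔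
            Ideal.span {p | ∃ i : ℕ, 1 ≤ i ∧ i ≤ d + 1 ∧ p = esymm (Fin n) K i})
          ((d + 2).choose 2)) :=
  stmt13_general K n d Δ hdown
end
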